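/- arXiv:1711.02394 — 4 statements merged into one kernel-verified Lean document; each statement's English description precedes it below -/
import Mathlib

section
/- Let G be a connected graph obtained from connected graphs G_0 and G_1 by identifying a vertex of G_0 with a vertex of G_1 into a single common vertex u (so V(G_0) ∩ V(G_1) = {u} and every edge of G lies in G_0 or in G_1). Then for every edge e = w₁w₂ of G_0 and each i ∈ {1,2}: n_{w_i}(e|G) = n_{w_i}(e|G_0) + δ(u)·(|V(G_1)| − 1) and m_{w_i}(e|G) = m_{w_i}(e|G_0) + δ(u)·|E(G_1)|, where δ(u) = 1 if d_{G_0}(w_i, u) < d_{G_0}(w_{3−i}, u) and δ(u) = 0 otherwise. -/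
open SimpleGraph Finset
open scoped Classical

noncomputable section

variable {V : Type*}

/-- number of vertices strictly closer to `u` than to `v` -/
def szN (G : SimpleGraph V) (u v : V) : ℕ :=
  {w : V | G.dist u w < G.dist v w}.ncard

/-- distance from an edge (unordered pair) to a vertex -/
def eDist (G : SimpleGraph V) (e : Sym2 V) (w : V) : ℕ :=
  Sym2.lift ⟨fun x y => min (G.dist x w) (G.dist y w), fun x y => min_comm _ _⟩ e

/-- number of edges strictly closer to `u` than to `v` -/
def szM (G : SimpleGraph V) (u v : V) : ℕ :=
  {e : Sym2 V | e ∈ G.edgeSet ∧ eDist G e u < eDist G e v}.ncard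

/-- edge Szeged index -/
def szE [Fintype V] (G : SimpleGraph V) : ℕ :=
  ∑ e ∈ G.edgeFinset,
    Sym2.lift ⟨fun u v => szM G u v * szM G v u, fun u v => mul_comm _ _⟩ e

/-- edge-vertex Szeged index -/
def szEV [Fintype V] (G : SimpleGraph V) : ℚ :=
  (1/2) * ∑ e ∈ G.edgeFinset,
    Sym2.lift ⟨fun u v => ((szN G u v * szM G v u + szN G v u * szM G u v : ℕ) : ℚ),
      fun u v => by push_cast; ring⟩ e

/-- the graph obtained from `H₀` and `H₁` by identifying the vertex `u₀` of `H₀`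
with the vertex `u₁` of `H₁` into a single common vertex (represented by
`Sum.inl u₀`) -/
def glue {V₀ V₁ : Type*} (H₀ : SimpleGraph V₀) (H₁ : SimpleGraph V₁)
    (u₀ : V₀) (u₁ : V₁) : SimpleGraph (V₀ ⊕ {x : V₁ // x ≠ u₁}) where
  Adj a b :=
    match a, b with
    | Sum.inl x, Sum.inl y => H₀.Adj x y
    | Sum.inl x, Sum.inr y => x = u₀ ∧ H₁.Adj u₁ y.1
    | Sum.inr x, Sum.inl y => y = u₀ ∧ H₁.Adj u₁ x.1
    | Sum.inr x, Sum.inr y => H₁.Adj x.1 y.1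
  symm := by
    constructor
    rintro (x | x) (y | y) h
    · exact h.symm
    · exact h
    · exact h
    · exact h.symm
  loopless := by
    constructor
    rintro (x | x) h
    · exact H₀.irrefl h
    · exact H₁.irrefl h

/-! A shortest walk in the glued graph `G` splits into a walk in `G₀` and a walk in `G₁`, so
`d_G(a, b)` is the `G₀`-distance of the projections of `a, b` to `G₀` plus the `G₁`-distance of
their projections to `G₁`, each projection collapsing the other side onto the cut vertex `u`.
For `w ∈ V(G₀)` the second summand of `d_G(w, b)` does not depend on `w`, so `b` is closer to `w₁`
than to `w₂` in `G` exactly when its projection to `G₀` is closer in `G₀`. The vertices of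
`G₁ - u` and the edges of `G₁` all project to `u` and are counted together: they contribute
`|V(G₁)| - 1` vertices and `|E(G₁)|` edges when `u` is closer to `w₁`, and nothing otherwise. -/

section Glue

variable {V₀ V₁ : Type*} {H₀ : SimpleGraph V₀} {H₁ : SimpleGraph V₁} {u₀ : V₀} {u₁ : V₁}

def glueProj₀ (u₀ : V₀) : V₀ ⊕ {x : V₁ // x ≠ u₁} → V₀ :=
  Sum.elim id fun _ => u₀

def glueProj₁ (u₁ : V₁) : V₀ ⊕ {x : V₁ // x ≠ u₁} → V₁ :=
  Sum.elim (fun _ => u₁) Subtype.val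

@[simp]
lemma glueProj₀_inl (x : V₀) : glueProj₀ (u₁ := u₁) u₀ (Sum.inl x) = x := rfl

@[simp]
lemma glueProj₁_inl (x : V₀) : glueProj₁ (V₀ := V₀) u₁ (Sum.inl x) = u₁ := rfl

def glueHom₀ (H₀ : SimpleGraph V₀) (H₁ : SimpleGraph V₁) (u₀ : V₀) (u₁ : V₁) :
    H₀ →g glue H₀ H₁ u₀ u₁ :=
  ⟨Sum.inl, id⟩

lemma glueHom₀_apply (x : V₀) : glueHom₀ H₀ H₁ u₀ u₁ x = Sum.inl x := rfl

def glueHom₁ (H₀ : SimpleGraph V₀) (H₁ : SimpleGraph V₁) (u₀ : V₀) (u₁ : V₁) :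
    H₁ →g glue H₀ H₁ u₀ u₁ where
  toFun y := if h : y = u₁ then Sum.inl u₀ else Sum.inr ⟨y, h⟩
  map_rel' {a b} hab := by
    by_cases ha : a = u₁ <;> by_cases hb : b = u₁
    · exact absurd (ha ▸ hb ▸ hab) H₁.irrefl
    · simp only [dif_pos ha, dif_neg hb]
      exact ⟨rfl, ha ▸ hab⟩
    · simp only [dif_neg ha, dif_pos hb]
      exact ⟨rfl, hb ▸ hab.symm⟩
    · simp only [dif_neg ha, dif_neg hb]
      exact hab

@[simp]
lemma glueHom₁_apply_self : glueHom₁ H₀ H₁ u₀ u₁ u₁ = Sum.inl u₀ := dif_pos rfl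

lemma glueHom₁_apply_of_ne {y : V₁} (hy : y ≠ u₁) :
    glueHom₁ H₀ H₁ u₀ u₁ y = Sum.inr ⟨y, hy⟩ :=
  dif_neg hy

@[simp]
lemma glueProj₀_glueHom₁ (y : V₁) : glueProj₀ u₀ (glueHom₁ H₀ H₁ u₀ u₁ y) = u₀ := by
  rcases eq_or_ne y u₁ with rfl | hy
  · rw [glueHom₁_apply_self]; rfl
  · rw [glueHom₁_apply_of_ne hy]; rfl

@[simp]
lemma glueProj₁_glueHom₁ (y : V₁) : glueProj₁ u₁ (glueHom₁ H₀ H₁ u₀ u₁ y) = y := by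
  rcases eq_or_ne y u₁ with rfl | hy
  · rw [glueHom₁_apply_self]; rfl
  · rw [glueHom₁_apply_of_ne hy]; rfl

lemma glueHom₁_injective : Function.Injective (glueHom₁ H₀ H₁ u₀ u₁) :=
  Function.LeftInverse.injective (g := glueProj₁ u₁) glueProj₁_glueHom₁

lemma glueProj_adj_or_of_glue_adj {a b : V₀ ⊕ {x : V₁ // x ≠ u₁}} (h : (glue H₀ H₁ u₀ u₁).Adj a b) :
    H₀.Adj (glueProj₀ u₀ a) (glueProj₀ u₀ b) ∧ glueProj₁ u₁ a = glueProj₁ u₁ b ∨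
      glueProj₀ u₀ a = glueProj₀ u₀ b ∧ H₁.Adj (glueProj₁ u₁ a) (glueProj₁ u₁ b) := by
  rcases a with x | x <;> rcases b with y | y
  · exact .inl ⟨h, rfl⟩
  · exact .inr ⟨h.1, h.2⟩
  · exact .inr ⟨h.1.symm, h.2.symm⟩
  · exact .inr ⟨rfl, h⟩

lemma SimpleGraph.Walk.exists_glueProj_length_add {a b : V₀ ⊕ {x : V₁ // x ≠ u₁}}
    (p : (glue H₀ H₁ u₀ u₁).Walk a b) :
    ∃ (p₀ : H₀.Walk (glueProj₀ u₀ a) (glueProj₀ u₀ b))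
      (p₁ : H₁.Walk (glueProj₁ u₁ a) (glueProj₁ u₁ b)), p₀.length + p₁.length = p.length := by
  induction p with
  | nil => exact ⟨.nil, .nil, rfl⟩
  | cons h _ ih =>
    obtain ⟨p₀, p₁, hp⟩ := ih
    rcases glueProj_adj_or_of_glue_adj h with ⟨h₀, e₁⟩ | ⟨e₀, h₁⟩
    · exact ⟨.cons h₀ p₀, p₁.copy e₁.symm rfl, by simp [← hp]; omega⟩
    · exact ⟨p₀.copy e₀.symm rfl, .cons h₁ p₁, by simp [← hp]; omega⟩

lemma exists_glue_walk_length_eq (h₀ : H₀.Connected) (h₁ : H₁.Connected)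
    (a b : V₀ ⊕ {x : V₁ // x ≠ u₁}) :
    ∃ p : (glue H₀ H₁ u₀ u₁).Walk a b, p.length =
      H₀.dist (glueProj₀ u₀ a) (glueProj₀ u₀ b) + H₁.dist (glueProj₁ u₁ a) (glueProj₁ u₁ b) := by
  have cross (x : V₀) (y : {x : V₁ // x ≠ u₁}) : ∃ p : (glue H₀ H₁ u₀ u₁).Walk (.inl x) (.inr y),
      p.length = H₀.dist x u₀ + H₁.dist u₁ y.1 := by
    obtain ⟨p, hp⟩ := h₀.exists_walk_length_eq_dist x u₀
    obtain ⟨q, hq⟩ := h₁.exists_walk_length_eq_dist u₁ y.1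
    exact ⟨((p.map (glueHom₀ H₀ H₁ u₀ u₁)).copy (glueHom₀_apply x) (glueHom₀_apply u₀)).append
      ((q.map (glueHom₁ H₀ H₁ u₀ u₁)).copy glueHom₁_apply_self (glueHom₁_apply_of_ne y.2)),
      by rw [Walk.length_append, Walk.length_copy, Walk.length_copy, Walk.length_map,
        Walk.length_map, hp, hq]⟩
  rcases a with x | x <;> rcases b with y | y
  · obtain ⟨p, hp⟩ := h₀.exists_walk_length_eq_dist x y
    exact ⟨(p.map (glueHom₀ H₀ H₁ u₀ u₁)).copy (glueHom₀_apply x) (glueHom₀_apply y), by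
      rw [Walk.length_copy, Walk.length_map, hp]; simp [glueProj₀, glueProj₁]⟩
  · simpa [glueProj₀, glueProj₁] using cross x y
  · obtain ⟨p, hp⟩ := cross y x
    exact ⟨p.reverse, by simp [hp, glueProj₀, glueProj₁, SimpleGraph.dist_comm]⟩
  · obtain ⟨q, hq⟩ := h₁.exists_walk_length_eq_dist x.1 y.1
    exact ⟨(q.map (glueHom₁ H₀ H₁ u₀ u₁)).copy (glueHom₁_apply_of_ne x.2)
      (glueHom₁_apply_of_ne y.2), by simp [hq, glueProj₀, glueProj₁]⟩

theorem dist_glue (h₀ : H₀.Connected) (h₁ : H₁.Connected) (a b : V₀ ⊕ {x : V₁ // x ≠ u₁}) :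
    (glue H₀ H₁ u₀ u₁).dist a b =
      H₀.dist (glueProj₀ u₀ a) (glueProj₀ u₀ b) + H₁.dist (glueProj₁ u₁ a) (glueProj₁ u₁ b) := by
  obtain ⟨p, hp⟩ := exists_glue_walk_length_eq (u₀ := u₀) h₀ h₁ a b
  obtain ⟨q, hq⟩ := p.reachable.exists_walk_length_eq_dist
  obtain ⟨q₀, q₁, hq'⟩ := q.exists_glueProj_length_add
  have hpq := dist_le p
  have hq₀ := dist_le q₀
  have hq₁ := dist_le q₁
  omega

lemma dist_glue_inl_lt_dist_glue_inl_iff (h₀ : H₀.Connected) (h₁ : H₁.Connected)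
    (w w' : V₀) (b : V₀ ⊕ {x : V₁ // x ≠ u₁}) :
    (glue H₀ H₁ u₀ u₁).dist (.inl w) b < (glue H₀ H₁ u₀ u₁).dist (.inl w') b ↔
      H₀.dist w (glueProj₀ u₀ b) < H₀.dist w' (glueProj₀ u₀ b) := by
  simp only [dist_glue h₀ h₁, glueProj₀_inl, glueProj₁_inl, Nat.add_lt_add_iff_right]

lemma ncard_preimage_glueProj₀ [Finite V₀] [Fintype V₁] (S : Set V₀) :
    (glueProj₀ (u₁ := u₁) u₀ ⁻¹' S).ncard =
      S.ncard + (if u₀ ∈ S then 1 else 0) * (Fintype.card V₁ - 1) := by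
  rw [glueProj₀, Set.preimage_sumElim, Set.preimage_id,
    Set.ncard_union_eq Set.disjoint_image_inl_image_inr,
    Set.ncard_image_of_injective _ Sum.inl_injective,
    Set.ncard_image_of_injective _ Sum.inr_injective]
  by_cases hu : u₀ ∈ S
  · simp [Set.preimage_const_of_mem hu, hu, Fintype.card_subtype_compl]
  · simp [Set.preimage_const_of_notMem hu, hu]

theorem szN_glue_inl (h₀ : H₀.Connected) (h₁ : H₁.Connected) [Finite V₀] [Fintype V₁]
    (w₁ w₂ : V₀) :
    szN (glue H₀ H₁ u₀ u₁) (.inl w₁) (.inl w₂) =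
      szN H₀ w₁ w₂ +
        (if H₀.dist w₁ u₀ < H₀.dist w₂ u₀ then 1 else 0) * (Fintype.card V₁ - 1) := by
  have hS : {b | (glue H₀ H₁ u₀ u₁).dist (.inl w₁) b < (glue H₀ H₁ u₀ u₁).dist (.inl w₂) b} =
      glueProj₀ u₀ ⁻¹' {x | H₀.dist w₁ x < H₀.dist w₂ x} :=
    Set.ext (dist_glue_inl_lt_dist_glue_inl_iff h₀ h₁ w₁ w₂)
  rw [szN, hS, ncard_preimage_glueProj₀, szN]
  congr

lemma edgeSet_glue : (glue H₀ H₁ u₀ u₁).edgeSet =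
    Sym2.map Sum.inl '' H₀.edgeSet ∪ Sym2.map (glueHom₁ H₀ H₁ u₀ u₁) '' H₁.edgeSet := by
  refine subset_antisymm (fun e he => ?_) (Set.union_subset ?_ ?_)
  · induction e using Sym2.ind with | _ a b =>
    rw [mem_edgeSet] at he
    rcases a with x | x <;> rcases b with y | y
    · exact .inl ⟨s(x, y), he, rfl⟩
    · refine .inr ⟨s(u₁, y.1), he.2, ?_⟩
      rw [Sym2.map_mk, glueHom₁_apply_self, glueHom₁_apply_of_ne y.2, he.1]
    · refine .inr ⟨s(x.1, u₁), he.2.symm, ?_⟩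
      rw [Sym2.map_mk, glueHom₁_apply_self, glueHom₁_apply_of_ne x.2, he.1]
    · refine .inr ⟨s(x.1, y.1), he, ?_⟩
      rw [Sym2.map_mk, glueHom₁_apply_of_ne x.2, glueHom₁_apply_of_ne y.2]
  · rintro _ ⟨e, he, rfl⟩
    exact (glueHom₀ H₀ H₁ u₀ u₁).map_mem_edgeSet he
  · rintro _ ⟨e, he, rfl⟩
    exact (glueHom₁ H₀ H₁ u₀ u₁).map_mem_edgeSet he

lemma eDist_glue_map_inl (h₀ : H₀.Connected) (h₁ : H₁.Connected) (e : Sym2 V₀) (w : V₀) :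
    eDist (glue H₀ H₁ u₀ u₁) (e.map Sum.inl) (.inl w) = eDist H₀ e w := by
  induction e using Sym2.ind with | _ a b => simp [eDist, dist_glue h₀ h₁]

lemma eDist_glue_map_glueHom₁ (h₀ : H₀.Connected) (h₁ : H₁.Connected) (e : Sym2 V₁) (w : V₀) :
    eDist (glue H₀ H₁ u₀ u₁) (e.map (glueHom₁ H₀ H₁ u₀ u₁)) (.inl w) =
      H₀.dist u₀ w + eDist H₁ e u₁ := by
  induction e using Sym2.ind with | _ a b => simp [eDist, dist_glue h₀ h₁, min_add_add_left]

lemma disjoint_image_map_inl_image_map_glueHom₁ (A : Set (Sym2 V₀)) {B : Set (Sym2 V₁)}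
    (hB : B ⊆ H₁.edgeSet) :
    Disjoint (Sym2.map Sum.inl '' A) (Sym2.map (glueHom₁ H₀ H₁ u₀ u₁) '' B) := by
  rw [Set.disjoint_left]
  rintro _ ⟨e₀, -, rfl⟩ ⟨e₁, he₁, heq⟩
  induction e₀ using Sym2.ind with | _ a b =>
  have he₁_eq : e₁ = s(u₁, u₁) := by
    simpa [Sym2.map_map, Function.comp_def] using congrArg (Sym2.map (glueProj₁ u₁)) heq
  exact H₁.not_isDiag_of_mem_edgeSet (hB he₁) (he₁_eq ▸ Sym2.mk_isDiag_iff.mpr rfl)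

theorem szM_glue_inl (h₀ : H₀.Connected) (h₁ : H₁.Connected) [Finite V₀] [Fintype V₁]
    (w₁ w₂ : V₀) :
    szM (glue H₀ H₁ u₀ u₁) (.inl w₁) (.inl w₂) =
      szM H₀ w₁ w₂ +
        (if H₀.dist w₁ u₀ < H₀.dist w₂ u₀ then 1 else 0) * H₁.edgeFinset.card := by
  set closer : Set (Sym2 (V₀ ⊕ {x : V₁ // x ≠ u₁})) :=
    {e | eDist (glue H₀ H₁ u₀ u₁) e (.inl w₁) < eDist (glue H₀ H₁ u₀ u₁) e (.inl w₂)}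
  have closer₀ : Sym2.map Sum.inl ⁻¹' closer = {e | eDist H₀ e w₁ < eDist H₀ e w₂} := by
    ext e
    simp [closer, eDist_glue_map_inl h₀ h₁]
  have closer₁ : Sym2.map (glueHom₁ H₀ H₁ u₀ u₁) ⁻¹' closer =
      {_e | H₀.dist w₁ u₀ < H₀.dist w₂ u₀} := by
    ext e
    simp [closer, eDist_glue_map_glueHom₁ h₀ h₁, SimpleGraph.dist_comm]
  rw [szM, Set.ofPred_and, Set.ofPred_mem_eq, edgeSet_glue, Set.union_inter_distrib_right,
    ← Set.image_inter_preimage, ← Set.image_inter_preimage, closer₀, closer₁,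
    Set.ncard_union_eq (disjoint_image_map_inl_image_map_glueHom₁ _ Set.inter_subset_left),
    Set.ncard_image_of_injective _ (Sym2.map.injective Sum.inl_injective),
    Set.ncard_image_of_injective _ (Sym2.map.injective glueHom₁_injective)]
  by_cases hδ : H₀.dist w₁ u₀ < H₀.dist w₂ u₀
  · simp [hδ, szM, Set.ofPred_and, ← coe_edgeFinset, Set.ncard_coe_finset]
  · simp [hδ, szM, Set.ofPred_and]

end Glue

theorem szN_szM_glue_general {V₀ V₁ : Type*} [Fintype V₀] [Fintype V₁]
    (H₀ : SimpleGraph V₀) (H₁ : SimpleGraph V₁) (u₀ : V₀) (u₁ : V₁)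
    (h₀ : H₀.Connected) (h₁ : H₁.Connected)
    (w₁ w₂ : V₀) :
    (szN (glue H₀ H₁ u₀ u₁) (Sum.inl w₁) (Sum.inl w₂) =
        szN H₀ w₁ w₂ +
          (if H₀.dist w₁ u₀ < H₀.dist w₂ u₀ then 1 else 0) * (Fintype.card V₁ - 1)) ∧
    (szM (glue H₀ H₁ u₀ u₁) (Sum.inl w₁) (Sum.inl w₂) =
        szM H₀ w₁ w₂ +
          (if H₀.dist w₁ u₀ < H₀.dist w₂ u₀ then 1 else 0) * H₁.edgeFinset.card) ∧
    (szN (glue H₀ H₁ u₀ u₁) (Sum.inl w₂) (Sum.inl w₁) =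
        szN H₀ w₂ w₁ +
          (if H₀.dist w₂ u₀ < H₀.dist w₁ u₀ then 1 else 0) * (Fintype.card V₁ - 1)) ∧
    (szM (glue H₀ H₁ u₀ u₁) (Sum.inl w₂) (Sum.inl w₁) =
        szM H₀ w₂ w₁ +
          (if H₀.dist w₂ u₀ < H₀.dist w₁ u₀ then 1 else 0) * H₁.edgeFinset.card) :=
  ⟨szN_glue_inl h₀ h₁ w₁ w₂, szM_glue_inl h₀ h₁ w₁ w₂,
    szN_glue_inl h₀ h₁ w₂ w₁, szM_glue_inl h₀ h₁ w₂ w₁⟩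

/-- Let `G` be the connected graph obtained from connected graphs `G₀`, `G₁` by
identifying a vertex of `G₀` with a vertex of `G₁` into a common vertex `u`.
Then for every edge `e = w₁w₂` of `G₀` and each `i ∈ {1,2}`,
`n_{wᵢ}(e|G) = n_{wᵢ}(e|G₀) + δ(u)(|V(G₁)| - 1)` and
`m_{wᵢ}(e|G) = m_{wᵢ}(e|G₀) + δ(u)|E(G₁)|`, where `δ(u) = 1` if `u` is strictly
closer to `wᵢ` than to the other endpoint in `G₀`, and `δ(u) = 0` otherwise. -/
theorem szN_szM_glue {V₀ V₁ : Type*} [Fintype V₀] [Fintype V₁]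
    (H₀ : SimpleGraph V₀) (H₁ : SimpleGraph V₁) (u₀ : V₀) (u₁ : V₁)
    (h₀ : H₀.Connected) (h₁ : H₁.Connected) (hG : (glue H₀ H₁ u₀ u₁).Connected)
    (w₁ w₂ : V₀) (he : H₀.Adj w₁ w₂) :
    (szN (glue H₀ H₁ u₀ u₁) (Sum.inl w₁) (Sum.inl w₂) =
        szN H₀ w₁ w₂ +
          (if H₀.dist w₁ u₀ < H₀.dist w₂ u₀ then 1 else 0) * (Fintype.card V₁ - 1)) ∧
    (szM (glue H₀ H₁ u₀ u₁) (Sum.inl w₁) (Sum.inl w₂) =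
        szM H₀ w₁ w₂ +
          (if H₀.dist w₁ u₀ < H₀.dist w₂ u₀ then 1 else 0) * H₁.edgeFinset.card) ∧
    (szN (glue H₀ H₁ u₀ u₁) (Sum.inl w₂) (Sum.inl w₁) =
        szN H₀ w₂ w₁ +
          (if H₀.dist w₂ u₀ < H₀.dist w₁ u₀ then 1 else 0) * (Fintype.card V₁ - 1)) ∧
    (szM (glue H₀ H₁ u₀ u₁) (Sum.inl w₂) (Sum.inl w₁) =
        szM H₀ w₂ w₁ +
          (if H₀.dist w₂ u₀ < H₀.dist w₁ u₀ then 1 else 0) * H₁.edgeFinset.card) :=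
  szN_szM_glue_general H₀ H₁ u₀ u₁ h₀ h₁ w₁ w₂
end
end

section
/- Let G be a connected graph of order n containing a cycle C_l = v₁v₂⋯v_l v₁ of even length l = 2k such that G − E(C_l) has exactly l components G₁,…,G_l with v_i ∈ G_i. With m_i = |E(G_i)|, m = Σ_{i=1}^{l} m_i, y_i = m_i + m_{i−1} + ⋯ + m_{i−k+1} (subscripts modulo l), and e_i = v_i v_{i+1}, one has Σ_{i=1}^{2k} m_{v_i}(e_i|G)·m_{v_{i+1}}(e_i|G) = 2k(k−1)(m+k−1) + Σ_{i=1}^{2k} y_i(m − y_i). -/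
open SimpleGraph Finset
open scoped Classical

noncomputable section

variable {V : Type*}

/-- the graph `G - E(C_l)` obtained by deleting the edges of the cycle
`v₀ v₁ ⋯ v_{l-1} v₀` -/
def offCycle (G : SimpleGraph V) (l : ℕ) (v : ZMod l → V) : SimpleGraph V :=
  G.deleteEdges {e : Sym2 V | ∃ i : ZMod l, e = s(v i, v (i + 1))}

/-- `nᵢ`: the number of vertices of the component `Gᵢ` of `G - E(C_l)`
containing `vᵢ` -/
def compV (G : SimpleGraph V) (l : ℕ) (v : ZMod l → V) (i : ZMod l) : ℕ :=
  {w : V | (offCycle G l v).Reachable (v i) w}.ncard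

/-- `mᵢ`: the number of edges of the component `Gᵢ` of `G - E(C_l)`
containing `vᵢ` -/
def compE (G : SimpleGraph V) (l : ℕ) (v : ZMod l → V) (i : ZMod l) : ℕ :=
  {e : Sym2 V | e ∈ (offCycle G l v).edgeSet ∧
    ∀ w ∈ e, (offCycle G l v).Reachable (v i) w}.ncard

/-- `m = m₁ + ⋯ + m_l` -/
def totE (G : SimpleGraph V) (l : ℕ) (v : ZMod l → V) : ℕ :=
  ∑ i ∈ Finset.range l, compE G l v (i : ZMod l)

/-- `xᵢ = nᵢ + n_{i-1} + ⋯ + n_{i-k+1}` -/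
def xSum (G : SimpleGraph V) (l : ℕ) (v : ZMod l → V) (k : ℕ) (i : ZMod l) : ℕ :=
  ∑ t ∈ Finset.range k, compV G l v (i - (t : ZMod l))

/-- `yᵢ = mᵢ + m_{i-1} + ⋯ + m_{i-k+1}` -/
def ySum (G : SimpleGraph V) (l : ℕ) (v : ZMod l → V) (k : ℕ) (i : ZMod l) : ℕ :=
  ∑ t ∈ Finset.range k, compE G l v (i - (t : ZMod l))


/-!
Write `Gⱼ` for the component of `G - E(C)` containing `vⱼ`. A shortest path from `vᵢ` to a
vertex `w` of `Gⱼ` runs along the cycle to `vⱼ` and then inside `Gⱼ`, so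
`d(vᵢ, w) = d_{Gⱼ}(vⱼ, w) + d_C(vᵢ, vⱼ)`. Hence an edge of `Gⱼ` is closer to `vᵢ` than to `vᵢ₊₁`
exactly when `vⱼ` is, which for `l = 2k` means `j ∈ {i, i-1, …, i-k+1}`, and there are no ties;
of the cycle edges, `k - 1` are closer to `vᵢ` and `k - 1` closer to `vᵢ₊₁`. So
`m_{vᵢ}(eᵢ) = yᵢ + k - 1` and `m_{vᵢ₊₁}(eᵢ) = m - yᵢ + k - 1`, and the identity follows by
expanding the product and summing over `i`.
-/

namespace ZMod

variable {n : ℕ} [NeZero n]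

lemma val_add_one_eq_ite (a : ZMod n) : (a + 1).val = if a.val + 1 = n then 0 else a.val + 1 := by
  rw [val_add, val_one_eq_one_mod, Nat.add_mod_mod]
  split_ifs with h
  · rw [h, Nat.mod_self]
  · exact Nat.mod_eq_of_lt (by have := a.val_lt; omega)

lemma val_sub_one_eq_ite (a : ZMod n) : (a - 1).val = if a.val = 0 then n - 1 else a.val - 1 := by
  have h := val_add_one_eq_ite (a - 1)
  rw [sub_add_cancel] at h
  have := (a - 1).val_lt
  split_ifs at h ⊢ <;> omega

lemma sum_range_natCast {M : Type*} [AddCommMonoid M] (f : ZMod n → M) :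
    ∑ t ∈ range n, f t = ∑ j, f j :=
  sum_nbij' (↑) val (by simp) (fun j _ => mem_range.2 j.val_lt)
    (fun t ht => val_cast_of_lt (mem_range.1 ht)) (fun j _ => natCast_zmod_val j) (fun _ _ => rfl)

lemma sum_range_sub_natCast {M : Type*} [AddCommMonoid M] {k : ℕ} (hk : k ≤ n) (i : ZMod n)
    (f : ZMod n → M) : ∑ t ∈ range k, f (i - t) = ∑ j with (i - j).val < k, f j := by
  refine sum_nbij' (i - ·) (fun j => (i - j).val) ?_ (by simp) ?_ (by simp) (by simp)
  all_goals
    intro t ht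
    rw [mem_range] at ht
    simp [val_cast_of_lt (ht.trans_le hk), ht]

lemma card_filter_val_sub (i : ZMod n) (P : ℕ → Prop) [DecidablePred P] :
    #{j | P (i - j).val} = #{t ∈ range n | P t} := by
  refine card_nbij' (fun j => (i - j).val) (i - ·) ?_ ?_ (fun j _ => by simp) ?_
  all_goals
    intro t ht
    simp only [coe_filter, mem_range, mem_univ, true_and, Set.mem_ofPred_eq] at ht
    simp [Nat.mod_eq_of_lt, ht, val_lt]

end ZMod

def cycleDist {n : ℕ} (i j : ZMod n) : ℕ := (i - j).valMinAbs.natAbs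

@[simp] lemma cycleDist_self {n : ℕ} (i : ZMod n) : cycleDist i i = 0 := by simp [cycleDist]

section cycleDist

variable {n : ℕ} [NeZero n] (i j : ZMod n)

lemma cycleDist_add_one_right_le : cycleDist i (j + 1) ≤ cycleDist i j + 1 := by
  rw [cycleDist, cycleDist, show i - (j + 1) = i - j - 1 by ring, ZMod.valMinAbs_natAbs_eq_min,
    ZMod.valMinAbs_natAbs_eq_min, ZMod.val_sub_one_eq_ite]
  have := (i - j).val_lt
  split_ifs <;> omega

lemma cycleDist_le_cycleDist_add_one_right : cycleDist i j ≤ cycleDist i (j + 1) + 1 := by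
  rw [cycleDist, cycleDist, show i - (j + 1) = i - j - 1 by ring, ZMod.valMinAbs_natAbs_eq_min,
    ZMod.valMinAbs_natAbs_eq_min, ZMod.val_sub_one_eq_ite]
  have := (i - j).val_lt
  split_ifs <;> omega

variable {k : ℕ}

lemma cycleDist_lt_cycleDist_add_one_iff (hn : n = 2 * k) :
    cycleDist i j < cycleDist (i + 1) j ↔ (i - j).val < k := by
  rw [cycleDist, cycleDist, show i + 1 - j = i - j + 1 by ring, ZMod.valMinAbs_natAbs_eq_min,
    ZMod.valMinAbs_natAbs_eq_min, ZMod.val_add_one_eq_ite]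
  have := (i - j).val_lt
  split_ifs <;> omega

lemma cycleDist_add_one_lt_cycleDist_iff (hn : n = 2 * k) :
    cycleDist (i + 1) j < cycleDist i j ↔ k ≤ (i - j).val := by
  rw [cycleDist, cycleDist, show i + 1 - j = i - j + 1 by ring, ZMod.valMinAbs_natAbs_eq_min,
    ZMod.valMinAbs_natAbs_eq_min, ZMod.val_add_one_eq_ite]
  have := (i - j).val_lt
  split_ifs <;> omega

lemma min_cycleDist_lt_min_cycleDist_add_one_iff (hn : n = 2 * k) :
    min (cycleDist i j) (cycleDist i (j + 1)) <
        min (cycleDist (i + 1) j) (cycleDist (i + 1) (j + 1)) ↔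
      0 < (i - j).val ∧ (i - j).val < k := by
  rw [cycleDist, cycleDist, cycleDist, cycleDist, show i + 1 - j = i - j + 1 by ring,
    show i - (j + 1) = i - j - 1 by ring, show i + 1 - (j + 1) = i - j by ring]
  simp only [ZMod.valMinAbs_natAbs_eq_min, ZMod.val_add_one_eq_ite, ZMod.val_sub_one_eq_ite]
  have := (i - j).val_lt
  split_ifs <;> omega

lemma min_cycleDist_add_one_lt_min_cycleDist_iff (hn : n = 2 * k) :
    min (cycleDist (i + 1) j) (cycleDist (i + 1) (j + 1)) <
        min (cycleDist i j) (cycleDist i (j + 1)) ↔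
      k < (i - j).val := by
  rw [cycleDist, cycleDist, cycleDist, cycleDist, show i + 1 - j = i - j + 1 by ring,
    show i - (j + 1) = i - j - 1 by ring, show i + 1 - (j + 1) = i - j by ring]
  simp only [ZMod.valMinAbs_natAbs_eq_min, ZMod.val_add_one_eq_ite, ZMod.val_sub_one_eq_ite]
  have := (i - j).val_lt
  split_ifs <;> omega

end cycleDist

namespace SimpleGraph

variable {G : SimpleGraph V} {f : V → ℕ}

lemma Walk.le_add_length_of_adj (hf : ∀ ⦃a b⦄, G.Adj a b → f b ≤ f a + 1) {u w : V}
    (p : G.Walk u w) : f w ≤ f u + p.length := by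
  induction p with
  | nil => simp
  | cons h _ ih => have := hf h; rw [length_cons]; omega

lemma Reachable.le_add_dist_of_adj (hf : ∀ ⦃a b⦄, G.Adj a b → f b ≤ f a + 1) {u w : V}
    (h : G.Reachable u w) : f w ≤ f u + G.dist u w := by
  obtain ⟨p, hp⟩ := h.exists_walk_length_eq_dist
  exact hp ▸ p.le_add_length_of_adj hf

end SimpleGraph

section offCycle

variable {G : SimpleGraph V} {l : ℕ} {v : ZMod l → V}

lemma mem_edgeSet_offCycle {e : Sym2 V} :
    e ∈ (offCycle G l v).edgeSet ↔ e ∈ G.edgeSet ∧ ¬∃ j, e = s(v j, v (j + 1)) := by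
  rw [offCycle, edgeSet_deleteEdges, Set.mem_sdiff, Set.mem_ofPred_eq]

lemma offCycle_adj_or_exists_of_adj {a b : V} (h : G.Adj a b) :
    (offCycle G l v).Adj a b ∨ ∃ j, s(a, b) = s(v j, v (j + 1)) := by
  by_cases hs : ∃ j, s(a, b) = s(v j, v (j + 1))
  · exact .inr hs
  · exact .inl (mem_edgeSet_offCycle.2 ⟨h, hs⟩)

end offCycle

-- `G - E(C)` has exactly `l` components `Gᵢ`, with `vᵢ ∈ Gᵢ`.
structure IsSeparatingCycle (G : SimpleGraph V) {l : ℕ} (v : ZMod l → V) : Prop where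
  adj : ∀ i, G.Adj (v i) (v (i + 1))
  exists_reachable : ∀ w, ∃ i, (offCycle G l v).Reachable (v i) w
  eq_of_reachable : ∀ i j, (offCycle G l v).Reachable (v i) (v j) → i = j

namespace IsSeparatingCycle

variable {G : SimpleGraph V} {l : ℕ} {v : ZMod l → V}

lemma injective (hC : IsSeparatingCycle G v) : Function.Injective v :=
  fun i j h => hC.eq_of_reachable i j (h ▸ .refl _)

lemma injective_cycleEdge (hC : IsSeparatingCycle G v) (hl : 3 ≤ l) :
    Function.Injective fun j : ZMod l => s(v j, v (j + 1)) := by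
  intro j j' h
  rcases Sym2.eq_iff.1 h with ⟨h1, -⟩ | ⟨h1, h2⟩
  · exact hC.injective h1
  · have h1 := hC.injective h1
    have h2 := hC.injective h2
    have : ((2 : ℕ) : ZMod l) = 0 := by
      push_cast
      linear_combination h2 - h1
    rw [ZMod.natCast_eq_zero_iff] at this
    exact absurd (Nat.le_of_dvd two_pos this) (by omega)

def index (hC : IsSeparatingCycle G v) (w : V) : ZMod l := (hC.exists_reachable w).choose

lemma reachable_index (hC : IsSeparatingCycle G v) (w : V) :
    (offCycle G l v).Reachable (v (hC.index w)) w :=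
  (hC.exists_reachable w).choose_spec

lemma index_eq_iff (hC : IsSeparatingCycle G v) {w : V} {i : ZMod l} :
    hC.index w = i ↔ (offCycle G l v).Reachable (v i) w :=
  ⟨fun h => h ▸ hC.reachable_index w,
    fun h => hC.eq_of_reachable _ _ ((hC.reachable_index w).trans h.symm)⟩

@[simp] lemma index_apply (hC : IsSeparatingCycle G v) (i : ZMod l) : hC.index (v i) = i :=
  hC.index_eq_iff.2 .rfl

lemma index_eq_of_adj (hC : IsSeparatingCycle G v) {x y : V} (h : (offCycle G l v).Adj x y) :
    hC.index y = hC.index x :=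
  hC.index_eq_iff.2 ((hC.reachable_index x).trans h.reachable)

def depth (hC : IsSeparatingCycle G v) (w : V) : ℕ := (offCycle G l v).dist (v (hC.index w)) w

@[simp] lemma depth_apply (hC : IsSeparatingCycle G v) (i : ZMod l) : hC.depth (v i) = 0 := by
  simp [depth]

lemma depth_le_of_adj (hC : IsSeparatingCycle G v) {x y : V} (h : (offCycle G l v).Adj x y) :
    hC.depth y ≤ hC.depth x + 1 := by
  rw [depth, depth, hC.index_eq_of_adj h, ← dist_eq_one_iff_adj.2 h]
  exact h.reachable.dist_triangle_right _

lemma dist_le_natAbs (hC : IsSeparatingCycle G v) (hconn : G.Connected) (j : ZMod l) (z : ℤ) :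
    G.dist (v j) (v (j + z)) ≤ z.natAbs := by
  induction z using Int.induction_on with
  | zero => simp
  | succ z ih =>
    have hstep := dist_eq_one_iff_adj.2 (hC.adj (j + z))
    have := hconn.dist_triangle (u := v j) (v := v (j + z)) (w := v (j + z + 1))
    push_cast at ih ⊢
    rw [← add_assoc]
    omega
  | pred z ih =>
    have hstep := dist_eq_one_iff_adj.2 (hC.adj (j - z - 1)).symm
    have := hconn.dist_triangle (u := v j) (v := v (j - z)) (w := v (j - z - 1))
    rw [sub_add_cancel] at hstep
    have e1 : j + ((-(z : ℤ) : ℤ) : ZMod l) = j - z := by push_cast; ring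
    have e2 : j + ((-(z : ℤ) - 1 : ℤ) : ZMod l) = j - z - 1 := by push_cast; ring
    rw [e1] at ih
    rw [e2]
    omega

lemma dist_le_cycleDist (hC : IsSeparatingCycle G v) (hconn : G.Connected) (i j : ZMod l) :
    G.dist (v i) (v j) ≤ cycleDist i j := by
  have := hC.dist_le_natAbs hconn j (i - j).valMinAbs
  rwa [ZMod.coe_valMinAbs, add_sub_cancel, dist_comm] at this

lemma depth_add_cycleDist_le_of_adj [NeZero l] (hC : IsSeparatingCycle G v) (i : ZMod l)
    {a b : V} (h : G.Adj a b) :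
    hC.depth b + cycleDist i (hC.index b) ≤ hC.depth a + cycleDist i (hC.index a) + 1 := by
  rcases offCycle_adj_or_exists_of_adj h with hH | ⟨j, hj⟩
  · have := hC.depth_le_of_adj hH
    rw [hC.index_eq_of_adj hH]
    omega
  · rcases Sym2.eq_iff.1 hj with ⟨rfl, rfl⟩ | ⟨rfl, rfl⟩
    · simpa using cycleDist_add_one_right_le i j
    · simpa using cycleDist_le_cycleDist_add_one_right i j

lemma dist_eq [NeZero l] (hC : IsSeparatingCycle G v) (hconn : G.Connected) (i : ZMod l)
    (w : V) : G.dist (v i) w = hC.depth w + cycleDist i (hC.index w) := by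
  refine le_antisymm ?_ ?_
  · have h1 := hconn.dist_triangle (u := v i) (v := v (hC.index w)) (w := w)
    have h2 := hC.dist_le_cycleDist hconn i (hC.index w)
    have h3 : G.dist (v (hC.index w)) w ≤ hC.depth w :=
      (hC.reachable_index w).dist_anti (deleteEdges_le _)
    omega
  · simpa using (hconn (v i) w).le_add_dist_of_adj fun _ _ =>
      hC.depth_add_cycleDist_le_of_adj i

lemma eDist_of_offCycle_adj [NeZero l] (hC : IsSeparatingCycle G v) (hconn : G.Connected)
    {x y : V} (h : (offCycle G l v).Adj x y) (i : ZMod l) :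
    eDist G s(x, y) (v i) = min (hC.depth x) (hC.depth y) + cycleDist i (hC.index x) := by
  simp only [eDist, Sym2.lift_mk]
  rw [dist_comm, dist_comm (u := y), hC.dist_eq hconn, hC.dist_eq hconn, hC.index_eq_of_adj h]
  omega

lemma eDist_cycleEdge [NeZero l] (hC : IsSeparatingCycle G v) (hconn : G.Connected)
    (i j : ZMod l) :
    eDist G s(v j, v (j + 1)) (v i) = min (cycleDist i j) (cycleDist i (j + 1)) := by
  simp only [eDist, Sym2.lift_mk]
  rw [dist_comm, dist_comm (u := v (j + 1)), hC.dist_eq hconn, hC.dist_eq hconn]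
  simp

end IsSeparatingCycle

section EdgeCount

variable [Fintype V] {G : SimpleGraph V} {l k : ℕ} {v : ZMod l → V}

variable (G l v) in
def compEdgeFinset (j : ZMod l) : Finset (Sym2 V) :=
  {e ∈ (offCycle G l v).edgeFinset | ∀ w ∈ e, (offCycle G l v).Reachable (v j) w}

variable (l v) in
def cycleEdgeFinset [NeZero l] : Finset (Sym2 V) :=
  univ.image fun j : ZMod l => s(v j, v (j + 1))

lemma compE_eq_card (j : ZMod l) : compE G l v j = #(compEdgeFinset G l v j) := by
  rw [compE, ← Set.ncard_coe_finset]
  congr 1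
  ext e
  simp [compEdgeFinset]

lemma disjoint_offCycle_edgeFinset_cycleEdgeFinset [NeZero l] :
    Disjoint (offCycle G l v).edgeFinset (cycleEdgeFinset l v) := by
  rw [disjoint_right]
  intro _ he
  obtain ⟨j, -, rfl⟩ := mem_image.1 he
  exact fun h => (mem_edgeSet_offCycle.1 (mem_edgeFinset.1 h)).2 ⟨j, rfl⟩

namespace IsSeparatingCycle

lemma edgeFinset_eq_union [NeZero l] (hC : IsSeparatingCycle G v) :
    G.edgeFinset = (offCycle G l v).edgeFinset ∪ cycleEdgeFinset l v := by
  ext e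
  simp only [mem_union, mem_edgeFinset, mem_edgeSet_offCycle, cycleEdgeFinset, mem_image,
    mem_univ, true_and]
  constructor
  · tauto
  · rintro (⟨he, -⟩ | ⟨j, rfl⟩)
    exacts [he, hC.adj j]

lemma offCycle_edgeFinset_eq_biUnion [NeZero l] (hC : IsSeparatingCycle G v) :
    (offCycle G l v).edgeFinset = univ.biUnion (compEdgeFinset G l v) := by
  ext e
  induction e with
  | _ x y =>
  simp only [compEdgeFinset, mem_biUnion, mem_univ, mem_filter, true_and, mem_edgeFinset,
    mem_edgeSet, Sym2.mem_iff, forall_eq_or_imp, forall_eq]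
  exact ⟨fun h => ⟨hC.index x, h, hC.reachable_index x, (hC.reachable_index x).trans h.reachable⟩,
    fun ⟨_, h, _⟩ => h⟩

lemma pairwiseDisjoint_compEdgeFinset (hC : IsSeparatingCycle G v) :
    Set.univ.PairwiseDisjoint (compEdgeFinset G l v) := by
  intro j _ j' _ hne
  refine disjoint_left.2 fun e he he' => hne ?_
  induction e with
  | _ x y =>
  simp only [compEdgeFinset, mem_filter] at he he'
  exact hC.eq_of_reachable _ _
    ((he.2 x (Sym2.mem_mk_left x y)).trans (he'.2 x (Sym2.mem_mk_left x y)).symm)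

lemma eDist_lt_eDist_iff_of_mem_compEdgeFinset [NeZero l] (hC : IsSeparatingCycle G v)
    (hconn : G.Connected) {e : Sym2 V} {j : ZMod l} (he : e ∈ compEdgeFinset G l v j)
    (i i' : ZMod l) :
    eDist G e (v i) < eDist G e (v i') ↔ cycleDist i j < cycleDist i' j := by
  induction e with
  | _ x y =>
  simp only [compEdgeFinset, mem_filter, mem_edgeFinset, mem_edgeSet] at he
  rw [hC.eDist_of_offCycle_adj hconn he.1, hC.eDist_of_offCycle_adj hconn he.1,
    hC.index_eq_iff.2 (he.2 x (Sym2.mem_mk_left x y)), Nat.add_lt_add_iff_left]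

lemma szM_eq [NeZero l] (hC : IsSeparatingCycle G v) (hconn : G.Connected) (hl : 3 ≤ l)
    (i i' : ZMod l) :
    szM G (v i) (v i') = ∑ j with cycleDist i j < cycleDist i' j, compE G l v j +
      #{j | min (cycleDist i j) (cycleDist i (j + 1)) <
        min (cycleDist i' j) (cycleDist i' (j + 1))} := by
  have hset : {e | e ∈ G.edgeSet ∧ eDist G e (v i) < eDist G e (v i')} =
      ↑{e ∈ G.edgeFinset | eDist G e (v i) < eDist G e (v i')} := by
    ext; simp
  rw [szM, hset, Set.ncard_coe_finset, hC.edgeFinset_eq_union, filter_union,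
    card_union_of_disjoint (disjoint_filter_filter disjoint_offCycle_edgeFinset_cycleEdgeFinset),
    hC.offCycle_edgeFinset_eq_biUnion, filter_biUnion,
    card_biUnion fun j _ j' _ h => disjoint_filter_filter
      (hC.pairwiseDisjoint_compEdgeFinset (Set.mem_univ j) (Set.mem_univ j') h),
    sum_filter, cycleEdgeFinset, filter_image,
    card_image_of_injective _ (hC.injective_cycleEdge hl)]
  congr 1
  · refine sum_congr rfl fun j _ => ?_
    rw [filter_congr fun e he => hC.eDist_lt_eDist_iff_of_mem_compEdgeFinset hconn he i i',
      filter_const, apply_ite card, card_empty, compE_eq_card]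
  · simp only [hC.eDist_cycleEdge hconn]

lemma szM_self_add_one [NeZero l] (hC : IsSeparatingCycle G v) (hconn : G.Connected)
    (hl : 3 ≤ l) (hlk : l = 2 * k) (i : ZMod l) :
    szM G (v i) (v (i + 1)) = ySum G l v k i + (k - 1) := by
  rw [hC.szM_eq hconn hl, filter_congr fun j _ => cycleDist_lt_cycleDist_add_one_iff i j hlk,
    filter_congr fun j _ => min_cycleDist_lt_min_cycleDist_add_one_iff i j hlk,
    ZMod.card_filter_val_sub i fun t => 0 < t ∧ t < k, ySum,
    ZMod.sum_range_sub_natCast (by omega) i]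
  have : {t ∈ range l | 0 < t ∧ t < k} = Ioo 0 k := by
    ext t
    simp only [mem_filter, mem_range, mem_Ioo]
    omega
  rw [this, Nat.card_Ioo, Nat.sub_zero]

lemma szM_add_one_self_add_ySum [NeZero l] (hC : IsSeparatingCycle G v) (hconn : G.Connected)
    (hl : 3 ≤ l) (hlk : l = 2 * k) (i : ZMod l) :
    szM G (v (i + 1)) (v i) + ySum G l v k i = totE G l v + (k - 1) := by
  rw [hC.szM_eq hconn hl, filter_congr fun j _ => cycleDist_add_one_lt_cycleDist_iff i j hlk,
    filter_congr fun j _ => min_cycleDist_add_one_lt_min_cycleDist_iff i j hlk,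
    ZMod.card_filter_val_sub i fun t => k < t, ySum,
    ZMod.sum_range_sub_natCast (by omega) i, totE, ZMod.sum_range_natCast (compE G l v)]
  have : {t ∈ range l | k < t} = Ioo k l := by
    ext t
    simp only [mem_filter, mem_range, mem_Ioo]
    omega
  rw [this, Nat.card_Ioo, add_right_comm,
    ← sum_filter_add_sum_filter_not univ fun j => k ≤ (i - j).val]
  simp only [not_le]
  omega

end IsSeparatingCycle

end EdgeCount

theorem szM_cycle_sum_even_general {V : Type*} [Fintype V] (G : SimpleGraph V)
    (l k : ℕ) (h3 : 3 ≤ l) (hlk : l = 2 * k) (v : ZMod l → V)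
    (hconn : G.Connected)
    (hadj : ∀ i : ZMod l, G.Adj (v i) (v (i + 1)))
    (hcover : ∀ w : V, ∃ i : ZMod l, (offCycle G l v).Reachable (v i) w)
    (hsep : ∀ i j : ZMod l, (offCycle G l v).Reachable (v i) (v j) → i = j) :
    ∑ i ∈ Finset.range l,
        (szM G (v i) (v (i + 1)) * szM G (v (i + 1)) (v i) : ℤ) =
      2 * k * (k - 1) * ((totE G l v : ℤ) + k - 1) +
        ∑ i ∈ Finset.range l,
          (ySum G l v k i : ℤ) * ((totE G l v : ℤ) - ySum G l v k i) := by
  have : NeZero l := ⟨by omega⟩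
  have hC : IsSeparatingCycle G v := ⟨hadj, hcover, hsep⟩
  have hk : 1 ≤ k := by omega
  have hterm (i : ZMod l) : (szM G (v i) (v (i + 1)) * szM G (v (i + 1)) (v i) : ℤ) =
      ySum G l v k i * (totE G l v - ySum G l v k i) + (k - 1) * (totE G l v + k - 1) := by
    have h1 := hC.szM_self_add_one hconn h3 hlk i
    have h2 := hC.szM_add_one_self_add_ySum hconn h3 hlk i
    zify [hk] at h1 h2
    linear_combination (szM G (v (i + 1)) (v i) : ℤ) * h1 + (ySum G l v k i + k - 1 : ℤ) * h2
  rw [sum_congr rfl fun (i : ℕ) _ => hterm i, sum_add_distrib, sum_const, card_range,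
    nsmul_eq_mul, (by exact_mod_cast hlk : (l : ℤ) = 2 * k)]
  ring

/-- Let `G` be a connected graph containing a cycle `C_l = v₀v₁⋯v_{l-1}v₀` of even
length `l = 2k` such that `G - E(C_l)` has exactly `l` components `G₀,…,G_{l-1}`
with `vᵢ ∈ Gᵢ`.  With `mᵢ = |E(Gᵢ)|`, `m = Σ mᵢ`, `yᵢ = mᵢ + ⋯ + m_{i-k+1}` and
`eᵢ = vᵢv_{i+1}`, one has
`Σᵢ m_{vᵢ}(eᵢ|G)·m_{v_{i+1}}(eᵢ|G) = 2k(k-1)(m+k-1) + Σᵢ yᵢ(m - yᵢ)`. -/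
theorem szM_cycle_sum_even {V : Type*} [Fintype V] (G : SimpleGraph V)
    (l k : ℕ) (h3 : 3 ≤ l) (hlk : l = 2 * k) (v : ZMod l → V)
    (hinj : Function.Injective v) (hconn : G.Connected)
    (hadj : ∀ i : ZMod l, G.Adj (v i) (v (i + 1)))
    (hcover : ∀ w : V, ∃ i : ZMod l, (offCycle G l v).Reachable (v i) w)
    (hsep : ∀ i j : ZMod l, (offCycle G l v).Reachable (v i) (v j) → i = j) :
    ∑ i ∈ Finset.range l,
        (szM G (v i) (v (i + 1)) * szM G (v (i + 1)) (v i) : ℤ) =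
      2 * k * (k - 1) * ((totE G l v : ℤ) + k - 1) +
        ∑ i ∈ Finset.range l,
          (ySum G l v k i : ℤ) * ((totE G l v : ℤ) - ySum G l v k i) :=
  szM_cycle_sum_even_general G l k h3 hlk v hconn hadj hcover hsep
end
end

section
/- Let G be a connected graph of order n containing a cycle C_l = v₁v₂⋯v_l v₁ (l ≥ 3) such that G − E(C_l) has exactly l components G₁,…,G_l with v_i ∈ G_i. With m_i = |E(G_i)|, m = Σ_{i=1}^{l} m_i, e_i = v_i v_{i+1}, and f(m,l) defined by f(m,l) = 2k(k−1)(m+k−1) if l = 2k and f(m,l) = k²(2m+2k+1) if l = 2k+1, one has Σ_{i=1}^{l} m_{v_i}(e_i|G)·m_{v_{i+1}}(e_i|G) ≥ f(m,l), with equality if and only if at most one of m₁, m₂, …, m_l is positive. -/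
open SimpleGraph Finset
open scoped Classical

noncomputable section

variable {V : Type*}

/-- `f(m,l) = 2k(k-1)(m+k-1)` if `l = 2k`, and `f(m,l) = k²(2m+2k+1)` if
`l = 2k+1` -/
def fVal (m l : ℕ) : ℤ :=
  if l % 2 = 0 then
    2 * ((l / 2 : ℕ) : ℤ) * (((l / 2 : ℕ) : ℤ) - 1) * ((m : ℤ) + ((l / 2 : ℕ) : ℤ) - 1)
  else
    ((l / 2 : ℕ) : ℤ)^2 * (2 * (m : ℤ) + 2 * ((l / 2 : ℕ) : ℤ) + 1)

/-!
Every vertex `w` lies in a unique branch `Gⱼ` of `G - E(C_l)`, and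
`d(vᵢ, w) = d_C(i, j) + d_{Gⱼ}(vⱼ, w)`; the lower bound holds because the right-hand side is
1-Lipschitz along the edges of `G` and vanishes at `vᵢ`. Hence an edge of `Gⱼ` is closer to `vᵢ`
than to `vᵢ₊₁` iff `vⱼ` is, and counting gives, with `k = ⌊l/2⌋` and `c = l - 1 - k`,
`m_{vᵢ}(eᵢ) = c + Yᵢ` and `m_{vᵢ₊₁}(eᵢ) = c + Zᵢ`, where `Yᵢ = mᵢ + mᵢ₋₁ + ⋯ + mᵢ₋ₖ₊₁` and
`Zᵢ = mᵢ₊₁ + ⋯ + mᵢ₊ₖ` (the second formula is the first one for the reflected cycle).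
Every `mⱼ` occurs in exactly `k` of the `Yᵢ` and in `k` of the `Zᵢ`, so
`Σ (c + Yᵢ)(c + Zᵢ) = l c² + 2kcm + Σ YᵢZᵢ = f(m, l) + Σ YᵢZᵢ`. Finally `Σ YᵢZᵢ = 0` iff no pair
of adjacent windows `[i - k + 1, i]`, `[i + 1, i + k]` both contain an index with `mⱼ > 0`, and
any two distinct indices lie in such a pair of windows.
-/

section CycDist

variable {l : ℕ}

def cycDist (l : ℕ) (i j : ZMod l) : ℕ := min (j - i).val (i - j).val

lemma cycDist_self (i : ZMod l) : cycDist l i i = 0 := by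
  simp [cycDist]

lemma cycDist_comm (i j : ZMod l) : cycDist l i j = cycDist l j i :=
  min_comm _ _

variable [NeZero l]

lemma cycDist_eq_min (i j : ZMod l) : cycDist l i j = min (j - i).val (l - (j - i).val) := by
  rw [cycDist, ← neg_sub j i, ZMod.neg_val]
  split_ifs with h
  · simp [h]
  · rfl

lemma ZMod.val_add_one_eq (x : ZMod l) :
    (x + 1).val = if x.val + 1 = l then 0 else x.val + 1 := by
  have hx := ZMod.val_lt x
  rw [ZMod.val_add, ZMod.val_one_eq_one_mod, Nat.add_mod_mod]
  split_ifs with h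
  · rw [h, Nat.mod_self]
  · exact Nat.mod_eq_of_lt (by omega)

lemma ZMod.val_sub_one_eq (x : ZMod l) :
    (x - 1).val = if x.val = 0 then l - 1 else x.val - 1 := by
  have h := ZMod.val_add_one_eq (x - 1)
  rw [sub_add_cancel] at h
  have := ZMod.val_lt (x - 1)
  split_ifs at h ⊢ <;> omega

lemma cycDist_add_one_le (i a : ZMod l) :
    cycDist l i a ≤ cycDist l i (a + 1) + 1 ∧ cycDist l i (a + 1) ≤ cycDist l i a + 1 := by
  rw [cycDist_eq_min, cycDist_eq_min, add_sub_right_comm, ZMod.val_add_one_eq]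
  have := ZMod.val_lt (a - i)
  split_ifs <;> omega

lemma cycDist_lt_cycDist_add_one_iff (i j : ZMod l) :
    cycDist l i j < cycDist l (i + 1) j ↔ (i - j).val < l / 2 := by
  rw [cycDist_comm, cycDist_comm _ j, cycDist_eq_min, cycDist_eq_min, add_sub_right_comm,
    ZMod.val_add_one_eq]
  have := ZMod.val_lt (i - j)
  split_ifs <;> omega

lemma min_cycDist_lt_min_cycDist_add_one_iff (i a : ZMod l) :
    min (cycDist l i a) (cycDist l i (a + 1)) <
        min (cycDist l (i + 1) a) (cycDist l (i + 1) (a + 1)) ↔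
      (i - a).val ∈ Finset.Ioo 0 (l - l / 2) := by
  rw [cycDist_comm i, cycDist_comm i, cycDist_comm (i + 1), cycDist_comm (i + 1),
    cycDist_eq_min, cycDist_eq_min, cycDist_eq_min, cycDist_eq_min, Finset.mem_Ioo,
    sub_add_eq_sub_sub, add_sub_add_right_eq_sub, add_sub_right_comm, ZMod.val_add_one_eq,
    ZMod.val_sub_one_eq]
  have := ZMod.val_lt (i - a)
  split_ifs <;> omega

end CycDist

section ZModSums

variable {l : ℕ} [NeZero l] {M : Type*} [AddCommMonoid M]

lemma sum_range_natCast_eq_sum_zmod (f : ZMod l → M) :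
    ∑ r ∈ range l, f r = ∑ j, f j :=
  Finset.sum_nbij' (fun r ↦ (r : ZMod l)) ZMod.val (fun _ _ ↦ mem_univ _)
    (fun j _ ↦ mem_range.mpr (ZMod.val_lt j))
    (fun _ hr ↦ ZMod.val_cast_of_lt (mem_range.mp hr)) (fun j _ ↦ ZMod.natCast_zmod_val j)
    (fun _ _ ↦ rfl)

lemma sum_zmod_eq_sum_range_sub (i : ZMod l) (f : ZMod l → M) :
    ∑ j, f j = ∑ r ∈ range l, f (i - r) := by
  rw [sum_range_natCast_eq_sum_zmod (fun j ↦ f (i - j))]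
  exact Fintype.sum_equiv (Equiv.subLeft i) _ _ (fun j ↦ by simp)

lemma sum_filter_val_sub_mem (i : ZMod l) {s : Finset ℕ} (hs : s ⊆ range l) (f : ZMod l → M) :
    ∑ j with (i - j).val ∈ s, f j = ∑ r ∈ s, f (i - r) := by
  rw [sum_filter, sum_zmod_eq_sum_range_sub i]
  rw [sum_congr rfl fun r hr ↦ by rw [sub_sub_cancel, ZMod.val_cast_of_lt (mem_range.mp hr)]]
  rw [← sum_filter, filter_mem_eq_inter, inter_eq_right.mpr hs]

lemma card_filter_val_sub_mem (i : ZMod l) {s : Finset ℕ} (hs : s ⊆ range l) :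
    #{j | (i - j).val ∈ s} = #s := by
  rw [card_eq_sum_ones, card_eq_sum_ones, sum_filter_val_sub_mem i hs]

end ZModSums

section CycleDecomposition

variable {V : Type*} {G : SimpleGraph V} {l : ℕ} {v : ZMod l → V}

lemma offCycle_le : offCycle G l v ≤ G := deleteEdges_le _

lemma not_offCycle_adj (a : ZMod l) : ¬ (offCycle G l v).Adj (v a) (v (a + 1)) :=
  fun h ↦ (deleteEdges_adj.mp h).2 ⟨a, rfl⟩

lemma offCycle_adj_or_exists_eq_cycle_edge {x y : V} (h : G.Adj x y) :
    (offCycle G l v).Adj x y ∨ ∃ a, s(x, y) = s(v a, v (a + 1)) := by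
  by_cases hc : ∃ a, s(x, y) = s(v a, v (a + 1))
  · exact Or.inr hc
  · exact Or.inl (deleteEdges_adj.mpr ⟨h, hc⟩)

lemma cycle_edge_injective (hl : 3 ≤ l) (hinj : Function.Injective v) :
    Function.Injective (fun a ↦ s(v a, v (a + 1))) := by
  intro a b h
  rcases Sym2.eq_iff.mp h with ⟨hab, -⟩ | ⟨hab, hba⟩
  · exact hinj hab
  · have h2 : ((2 : ℕ) : ZMod l) = 0 := by
      push_cast
      linear_combination hinj hba - hinj hab
    have := Nat.le_of_dvd two_pos ((ZMod.natCast_eq_zero_iff _ _).mp h2)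
    omega

structure IsCycleDecomposition (G : SimpleGraph V) (l : ℕ) (v : ZMod l → V) : Prop where
  connected : G.Connected
  injective : Function.Injective v
  adj : ∀ i, G.Adj (v i) (v (i + 1))
  exists_reachable : ∀ w, ∃ i, (offCycle G l v).Reachable (v i) w
  eq_of_reachable : ∀ i j, (offCycle G l v).Reachable (v i) (v j) → i = j

namespace IsCycleDecomposition

variable (hC : IsCycleDecomposition G l v)
include hC

def branch (w : V) : ZMod l := (hC.exists_reachable w).choose

def depth (w : V) : ℕ := (offCycle G l v).dist (v (hC.branch w)) w

lemma reachable_branch (w : V) : (offCycle G l v).Reachable (v (hC.branch w)) w :=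
  (hC.exists_reachable w).choose_spec

lemma branch_eq {j : ZMod l} {w : V} (h : (offCycle G l v).Reachable (v j) w) :
    hC.branch w = j :=
  hC.eq_of_reachable _ _ ((hC.reachable_branch w).trans h.symm)

lemma branch_apply (i : ZMod l) : hC.branch (v i) = i :=
  hC.branch_eq .rfl

lemma depth_apply (i : ZMod l) : hC.depth (v i) = 0 := by
  rw [depth, branch_apply, dist_self]

lemma branch_eq_branch_of_adj {x y : V} (h : (offCycle G l v).Adj x y) :
    hC.branch y = hC.branch x :=
  hC.branch_eq ((hC.reachable_branch x).trans h.reachable)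

lemma depth_le_of_adj {x y : V} (h : (offCycle G l v).Adj x y) :
    hC.depth y ≤ hC.depth x + 1 := by
  obtain ⟨p, hp⟩ := (hC.reachable_branch x).exists_walk_length_eq_dist
  rw [depth, depth, hC.branch_eq_branch_of_adj h, ← hp, ← Walk.length_concat p h]
  exact dist_le _

lemma dist_le_natCast (i : ZMod l) (t : ℕ) : G.dist (v i) (v (i + t)) ≤ t := by
  induction t with
  | zero => simp
  | succ t ih =>
    rw [Nat.cast_succ, ← add_assoc]
    calc G.dist (v i) (v (i + t + 1))
        ≤ G.dist (v i) (v (i + t)) + G.dist (v (i + t)) (v (i + t + 1)) :=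
          hC.connected.dist_triangle
      _ ≤ t + 1 := add_le_add ih (dist_le (hC.adj _).toWalk)

variable [NeZero l]

lemma cycDist_add_depth_le_of_adj (i : ZMod l) {x y : V} (h : G.Adj x y) :
    cycDist l i (hC.branch y) + hC.depth y ≤ cycDist l i (hC.branch x) + hC.depth x + 1 := by
  rcases offCycle_adj_or_exists_eq_cycle_edge h with hH | ⟨a, ha⟩
  · rw [hC.branch_eq_branch_of_adj hH]
    have := hC.depth_le_of_adj hH
    omega
  · have := cycDist_add_one_le i a
    rcases Sym2.eq_iff.mp ha with ⟨rfl, rfl⟩ | ⟨rfl, rfl⟩ <;>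
      simp only [branch_apply, depth_apply] <;> omega

lemma cycDist_add_depth_le_of_walk (i : ZMod l) {x y : V} (p : G.Walk x y) :
    cycDist l i (hC.branch y) + hC.depth y ≤
      cycDist l i (hC.branch x) + hC.depth x + p.length := by
  induction p with
  | nil => simp
  | cons h _ ih =>
    have := hC.cycDist_add_depth_le_of_adj i h
    rw [Walk.length_cons]
    omega

lemma dist_le_cycDist (i j : ZMod l) : G.dist (v i) (v j) ≤ cycDist l i j := by
  refine le_min ?_ ?_
  · simpa using hC.dist_le_natCast i (j - i).val
  · simpa [dist_comm] using hC.dist_le_natCast j (i - j).val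

theorem dist_eq (i : ZMod l) (w : V) :
    G.dist (v i) w = cycDist l i (hC.branch w) + hC.depth w := by
  refine le_antisymm ?_ ?_
  · calc G.dist (v i) w ≤ G.dist (v i) (v (hC.branch w)) + G.dist (v (hC.branch w)) w :=
          hC.connected.dist_triangle
      _ ≤ cycDist l i (hC.branch w) + hC.depth w :=
          add_le_add (hC.dist_le_cycDist _ _) ((hC.reachable_branch w).dist_anti offCycle_le)
  · obtain ⟨p, hp⟩ := hC.connected.exists_walk_length_eq_dist (v i) w
    simpa [branch_apply, depth_apply, cycDist_self, hp] using hC.cycDist_add_depth_le_of_walk i p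

lemma dist_apply_apply (i j : ZMod l) : G.dist (v i) (v j) = cycDist l i j := by
  rw [hC.dist_eq, branch_apply, depth_apply, add_zero]

end IsCycleDecomposition

end CycleDecomposition

section EdgeCount

variable {V : Type*} {G : SimpleGraph V} {l : ℕ} {v : ZMod l → V}

variable (G l v) in
def branchEdges (j : ZMod l) : Set (Sym2 V) :=
  {e | e ∈ (offCycle G l v).edgeSet ∧ ∀ w ∈ e, (offCycle G l v).Reachable (v j) w}

lemma compE_eq_ncard_branchEdges (j : ZMod l) : compE G l v j = (branchEdges G l v j).ncard :=
  rfl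

namespace IsCycleDecomposition

variable (hC : IsCycleDecomposition G l v)
include hC

lemma pairwiseDisjoint_branchEdges (s : Set (ZMod l)) :
    s.PairwiseDisjoint (branchEdges G l v) := by
  intro j _ j' _ hne
  refine Set.disjoint_left.mpr fun e ⟨_, hj⟩ ⟨_, hj'⟩ ↦ hne ?_
  induction e using Sym2.ind with
  | _ x y => exact hC.eq_of_reachable _ _ ((hj x (Sym2.mem_mk_left x y)).trans
      (hj' x (Sym2.mem_mk_left x y)).symm)

variable [NeZero l]

lemma eDist_cycle_edge (a i : ZMod l) :
    eDist G s(v a, v (a + 1)) (v i) = min (cycDist l i a) (cycDist l i (a + 1)) := by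
  change min (G.dist (v a) (v i)) (G.dist (v (a + 1)) (v i)) = _
  rw [dist_comm, hC.dist_apply_apply, dist_comm, hC.dist_apply_apply]

lemma eDist_of_offCycle_adj {x y : V} (h : (offCycle G l v).Adj x y) (i : ZMod l) :
    eDist G s(x, y) (v i) = cycDist l i (hC.branch x) + min (hC.depth x) (hC.depth y) := by
  change min (G.dist x (v i)) (G.dist y (v i)) = _
  rw [dist_comm, hC.dist_eq, dist_comm, hC.dist_eq, hC.branch_eq_branch_of_adj h,
    Nat.add_min_add_left]

lemma setOf_eDist_lt_eq (i i' : ZMod l) :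
    {e | e ∈ G.edgeSet ∧ eDist G e (v i) < eDist G e (v i')} =
      (fun a ↦ s(v a, v (a + 1))) ''
          {a | min (cycDist l i a) (cycDist l i (a + 1)) <
            min (cycDist l i' a) (cycDist l i' (a + 1))} ∪
        ⋃ j ∈ {j | cycDist l i j < cycDist l i' j}, branchEdges G l v j := by
  ext e
  induction e using Sym2.ind with | _ x y => ?_
  simp only [Set.mem_ofPred_eq, mem_edgeSet, Set.mem_union, Set.mem_image, Set.mem_iUnion,
    branchEdges, exists_prop]
  constructor
  · rintro ⟨hxy, hlt⟩
    rcases offCycle_adj_or_exists_eq_cycle_edge hxy with hH | ⟨a, ha⟩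
    · rw [hC.eDist_of_offCycle_adj hH, hC.eDist_of_offCycle_adj hH] at hlt
      refine Or.inr ⟨hC.branch x, by omega, hH, fun w hw ↦ ?_⟩
      rcases Sym2.mem_iff.mp hw with rfl | rfl
      · exact hC.reachable_branch w
      · exact hC.branch_eq_branch_of_adj hH ▸ hC.reachable_branch w
    · rw [ha, hC.eDist_cycle_edge, hC.eDist_cycle_edge] at hlt
      exact Or.inl ⟨a, hlt, ha.symm⟩
  · rintro (⟨a, hlt, ha⟩ | ⟨j, hj, hH, hreach⟩)
    · rw [← ha, hC.eDist_cycle_edge, hC.eDist_cycle_edge]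
      refine ⟨?_, hlt⟩
      rw [← mem_edgeSet, ← ha]
      exact hC.adj a
    · rw [hC.eDist_of_offCycle_adj hH, hC.eDist_of_offCycle_adj hH,
        hC.branch_eq (hreach x (Sym2.mem_mk_left x y))]
      exact ⟨offCycle_le hH, by omega⟩

lemma szM_apply_apply [Fintype V] (hl : 3 ≤ l) (i i' : ZMod l) :
    szM G (v i) (v i') =
      #{a | min (cycDist l i a) (cycDist l i (a + 1)) <
          min (cycDist l i' a) (cycDist l i' (a + 1))} +
        ∑ j with cycDist l i j < cycDist l i' j, compE G l v j := by
  rw [szM, hC.setOf_eDist_lt_eq, Set.ncard_union_eq,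
    Set.ncard_image_of_injective _ (cycle_edge_injective hl hC.injective),
    (Set.toFinite _).ncard_biUnion (fun _ _ ↦ Set.toFinite _)
      (hC.pairwiseDisjoint_branchEdges _), ← Set.ncard_coe_finset, ← finsum_mem_coe_finset]
  · simp only [coe_filter, mem_univ, true_and, compE_eq_ncard_branchEdges]
  · refine Set.disjoint_left.mpr ?_
    rintro _ ⟨a, -, rfl⟩ he
    obtain ⟨j, -, hH, -⟩ := Set.mem_iUnion₂.mp he
    exact not_offCycle_adj a hH

end IsCycleDecomposition

end EdgeCount

section Reflection

variable {V : Type*} {G : SimpleGraph V} {l : ℕ} {v : ZMod l → V}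

lemma offCycle_comp_neg : offCycle G l (fun i ↦ v (-i)) = offCycle G l v := by
  unfold offCycle
  congr 1
  ext e
  constructor <;> rintro ⟨i, rfl⟩ <;> refine ⟨-i - 1, ?_⟩ <;> rw [Sym2.eq_swap] <;> ring_nf

lemma compE_comp_neg (j : ZMod l) : compE G l (fun i ↦ v (-i)) j = compE G l v (-j) := by
  rw [compE, compE, offCycle_comp_neg]

lemma IsCycleDecomposition.comp_neg (hC : IsCycleDecomposition G l v) :
    IsCycleDecomposition G l (fun i ↦ v (-i)) where
  connected := hC.connected
  injective := hC.injective.comp neg_injective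
  adj i := by
    have := (hC.adj (-i - 1)).symm
    rwa [sub_add_cancel, ← neg_add'] at this
  exists_reachable w := by
    obtain ⟨i, h⟩ := hC.exists_reachable w
    exact ⟨-i, by rwa [offCycle_comp_neg, neg_neg]⟩
  eq_of_reachable i j h := by
    rw [offCycle_comp_neg] at h
    exact neg_inj.mp (hC.eq_of_reachable _ _ h)

end Reflection

namespace IsCycleDecomposition

variable {V : Type*} [Fintype V] {G : SimpleGraph V} {l : ℕ} [NeZero l] {v : ZMod l → V}
  (hC : IsCycleDecomposition G l v) (hl : 3 ≤ l)
include hC hl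

lemma szM_apply_add_one (i : ZMod l) :
    szM G (v i) (v (i + 1)) = l - 1 - l / 2 + ∑ t ∈ range (l / 2), compE G l v (i - t) := by
  have hcycle : #{a | min (cycDist l i a) (cycDist l i (a + 1)) <
      min (cycDist l (i + 1) a) (cycDist l (i + 1) (a + 1))} = l - 1 - l / 2 := by
    rw [filter_congr fun a _ ↦ min_cycDist_lt_min_cycDist_add_one_iff i a,
      card_filter_val_sub_mem i fun r hr ↦ mem_range.mpr (by have := (mem_Ioo.mp hr).2; omega),
      Nat.card_Ioo]
    omega
  have hbranch : ∑ j with cycDist l i j < cycDist l (i + 1) j, compE G l v j =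
      ∑ t ∈ range (l / 2), compE G l v (i - t) := by
    rw [filter_congr fun j _ ↦ (cycDist_lt_cycDist_add_one_iff i j).trans mem_range.symm,
      sum_filter_val_sub_mem i (range_subset_range.mpr (by omega))]
  rw [hC.szM_apply_apply hl, hcycle, hbranch]

lemma szM_add_one_apply (i : ZMod l) :
    szM G (v (i + 1)) (v i) = l - 1 - l / 2 + ∑ t ∈ range (l / 2), compE G l v (i + 1 + t) := by
  have h := hC.comp_neg.szM_apply_add_one hl (-(i + 1))
  simpa only [neg_neg, show -(-(i + 1) + 1) = i by ring, compE_comp_neg, neg_sub, sub_neg_eq_add,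
    add_comm _ (i + 1)] using h

end IsCycleDecomposition

section Windows

variable {l : ℕ} [NeZero l]

lemma sum_sum_range_add {M : Type*} [AddCommMonoid M] (f : ZMod l → M) (c : ℕ → ZMod l)
    (k : ℕ) : ∑ i, ∑ t ∈ range k, f (i + c t) = k • ∑ i, f i := by
  rw [sum_comm, sum_congr rfl fun t _ ↦ Fintype.sum_equiv (Equiv.addRight (c t))
    (fun i ↦ f (i + c t)) f fun _ ↦ rfl,
    sum_const, card_range]

lemma window_mul_window_eq_zero_iff (hl : 2 ≤ l) (m : ZMod l → ℕ) :
    (∀ i, (∑ t ∈ range (l / 2), m (i - t)) * ∑ t ∈ range (l / 2), m (i + 1 + t) = 0) ↔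
      ∀ i j, 0 < m i → 0 < m j → i = j := by
  constructor
  · intro h i j hi hj
    by_contra hne
    wlog hd : (j - i).val ≤ l / 2 generalizing i j
    · refine this j i hj hi (Ne.symm hne) ?_
      rw [← neg_sub, ZMod.neg_val, if_neg (sub_ne_zero.mpr (Ne.symm hne))]
      omega
    have hd0 : (j - i).val ≠ 0 := by simpa [sub_eq_zero] using Ne.symm hne
    have hY : 0 < ∑ t ∈ range (l / 2), m (i - t) :=
      sum_pos' (fun _ _ ↦ Nat.zero_le _) ⟨0, mem_range.mpr (by omega), by simpa using hi⟩
    have hZ : 0 < ∑ t ∈ range (l / 2), m (i + 1 + t) := by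
      refine sum_pos' (fun _ _ ↦ Nat.zero_le _)
        ⟨(j - i).val - 1, mem_range.mpr (by omega), ?_⟩
      rwa [Nat.cast_sub (Nat.one_le_iff_ne_zero.mpr hd0), ZMod.natCast_zmod_val, Nat.cast_one,
        add_add_sub_cancel, add_sub_cancel]
    exact (Nat.mul_pos hY hZ).ne' (h i)
  · intro h i
    by_contra hne
    obtain ⟨t, ht, hmt⟩ := exists_ne_zero_of_sum_ne_zero (left_ne_zero_of_mul hne)
    obtain ⟨u, hu, hmu⟩ := exists_ne_zero_of_sum_ne_zero (right_ne_zero_of_mul hne)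
    have heq := h _ _ (Nat.pos_of_ne_zero hmt) (Nat.pos_of_ne_zero hmu)
    have hdvd : l ∣ t + 1 + u := by
      rw [← ZMod.natCast_eq_zero_iff]
      push_cast
      linear_combination -heq
    have := Nat.le_of_dvd (by omega) hdvd
    rw [mem_range] at ht hu
    omega

end Windows

lemma fVal_eq (l m : ℕ) :
    fVal m l = ((l * (l - 1 - l / 2) ^ 2 + 2 * (l / 2) * (l - 1 - l / 2) * m : ℕ) : ℤ) := by
  obtain ⟨k, rfl | rfl⟩ := Nat.even_or_odd' l
  · rw [fVal, if_pos (by omega), show 2 * k / 2 = k by omega]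
    rcases k with _ | k
    · simp
    · rw [show 2 * (k + 1) - 1 - (k + 1) = k by omega]
      push_cast
      ring
  · rw [fVal, if_neg (by omega), show (2 * k + 1) / 2 = k by omega,
      show 2 * k + 1 - 1 - k = k by omega]
    push_cast
    ring

namespace IsCycleDecomposition

variable {V : Type*} [Fintype V] {G : SimpleGraph V} {l : ℕ} [NeZero l] {v : ZMod l → V}

lemma sum_szM_mul_szM (hC : IsCycleDecomposition G l v) (hl : 3 ≤ l) :
    ∑ i, szM G (v i) (v (i + 1)) * szM G (v (i + 1)) (v i) =
      l * (l - 1 - l / 2) ^ 2 + 2 * (l / 2) * (l - 1 - l / 2) * ∑ j, compE G l v j +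
        ∑ i, (∑ t ∈ range (l / 2), compE G l v (i - t)) *
          ∑ t ∈ range (l / 2), compE G l v (i + 1 + t) := by
  have hY := sum_sum_range_add (compE G l v) (fun t ↦ -(t : ZMod l)) (l / 2)
  have hZ := sum_sum_range_add (compE G l v) (fun t ↦ 1 + (t : ZMod l)) (l / 2)
  simp only [← sub_eq_add_neg, ← add_assoc, smul_eq_mul] at hY hZ
  simp only [hC.szM_apply_add_one hl, hC.szM_add_one_apply hl, add_mul, mul_add, sum_add_distrib,
    ← mul_sum, ← sum_mul, hY, hZ, sum_const, card_univ, ZMod.card, smul_eq_mul]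
  ring

end IsCycleDecomposition

/-- Let `G` be a connected graph containing a cycle `C_l = v₀v₁⋯v_{l-1}v₀`
(`l ≥ 3`) such that `G - E(C_l)` has exactly `l` components `G₀,…,G_{l-1}` with
`vᵢ ∈ Gᵢ`.  With `mᵢ = |E(Gᵢ)|`, `m = Σ mᵢ` and `eᵢ = vᵢv_{i+1}`, one has
`Σᵢ m_{vᵢ}(eᵢ|G)·m_{v_{i+1}}(eᵢ|G) ≥ f(m,l)`, with equality iff at most one of
the `mᵢ` is positive. -/
theorem szM_cycle_sum_lower_bound {V : Type*} [Fintype V] (G : SimpleGraph V)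
    (l : ℕ) (h3 : 3 ≤ l) (v : ZMod l → V)
    (hinj : Function.Injective v) (hconn : G.Connected)
    (hadj : ∀ i : ZMod l, G.Adj (v i) (v (i + 1)))
    (hcover : ∀ w : V, ∃ i : ZMod l, (offCycle G l v).Reachable (v i) w)
    (hsep : ∀ i j : ZMod l, (offCycle G l v).Reachable (v i) (v j) → i = j) :
    fVal (totE G l v) l ≤
      ∑ i ∈ Finset.range l,
        (szM G (v i) (v (i + 1)) * szM G (v (i + 1)) (v i) : ℤ) ∧
    (∑ i ∈ Finset.range l,
        (szM G (v i) (v (i + 1)) * szM G (v (i + 1)) (v i) : ℤ) =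
          fVal (totE G l v) l ↔
      ∀ i j : ZMod l, 0 < compE G l v i → 0 < compE G l v j → i = j) := by
  have : NeZero l := ⟨by omega⟩
  have hC : IsCycleDecomposition G l v := ⟨hconn, hinj, hadj, hcover, hsep⟩
  have hsum : ∑ i ∈ range l, (szM G (v i) (v (i + 1)) * szM G (v (i + 1)) (v i) : ℤ) =
      ((∑ i, szM G (v i) (v (i + 1)) * szM G (v (i + 1)) (v i) : ℕ) : ℤ) := by
    rw [← sum_range_natCast_eq_sum_zmod]
    push_cast
    rfl
  rw [hsum, hC.sum_szM_mul_szM h3, totE, sum_range_natCast_eq_sum_zmod (compE G l v), fVal_eq,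
    Nat.cast_le, Nat.cast_inj, add_eq_left, sum_eq_zero_iff,
    ← window_mul_window_eq_zero_iff (by omega)]
  simp
end
end

section
/- Let G be a connected graph of order n containing a cycle C_l = v₁v₂⋯v_l v₁ (l ≥ 3) such that G − E(C_l) has exactly l components G₁,…,G_l with v_i ∈ G_i. With m_i = |E(G_i)|, m = Σ_{i=1}^{l} m_i, e_i = v_i v_{i+1}, and g(n,m,l) defined by g(n,m,l) = 2k²(n+m) − 2kn if l = 2k and g(n,m,l) = 2k²(n+m) if l = 2k+1, one has Σ_{i=1}^{l} [n_{v_i}(e_i|G)·m_{v_{i+1}}(e_i|G) + n_{v_{i+1}}(e_i|G)·m_{v_i}(e_i|G)] ≥ g(n,m,l), with equality if and only if at most one of m₁, m₂, …, m_l is positive. -/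
open SimpleGraph Finset
open scoped Classical

noncomputable section

variable {V : Type*}

/-- `g(n,m,l) = 2k²(n+m) - 2kn` if `l = 2k`, and `g(n,m,l) = 2k²(n+m)` if
`l = 2k+1` -/
def gVal (n m l : ℕ) : ℤ :=
  if l % 2 = 0 then
    2 * ((l / 2 : ℕ) : ℤ)^2 * ((n : ℤ) + m) - 2 * ((l / 2 : ℕ) : ℤ) * n
  else
    2 * ((l / 2 : ℕ) : ℤ)^2 * ((n : ℤ) + m)

namespace SzProof

/-- cyclic distance on `ZMod l` -/
def cd (l : ℕ) (i j : ZMod l) : ℕ := min (j - i).val (i - j).val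

variable {l : ℕ} [NeZero l]

lemma val_sub_add (x y : ZMod l) :
    (x - y).val + y.val = x.val ∨ (x - y).val + y.val = x.val + l := by
  have hv := congrArg ZMod.val (sub_add_cancel x y)
  rw [ZMod.val_add] at hv
  rcases Nat.lt_or_ge ((x - y).val + y.val) l with h | h
  · left; rwa [Nat.mod_eq_of_lt h] at hv
  · right
    have h2 : (x - y).val + y.val - l < l := by
      have := ZMod.val_lt (x - y); have := ZMod.val_lt y; omega
    rw [Nat.mod_eq_sub_mod h, Nat.mod_eq_of_lt h2] at hv
    omega

lemma val_add_add (x y : ZMod l) :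
    (x + y).val = x.val + y.val ∨ (x + y).val + l = x.val + y.val := by
  rw [ZMod.val_add]
  rcases Nat.lt_or_ge (x.val + y.val) l with h | h
  · left; rw [Nat.mod_eq_of_lt h]
  · right
    have h2 : x.val + y.val - l < l := by
      have := ZMod.val_lt x; have := ZMod.val_lt y; omega
    rw [Nat.mod_eq_sub_mod h, Nat.mod_eq_of_lt h2]
    omega

lemma val_neg_add (x : ZMod l) : (-x).val + x.val = 0 ∨ (-x).val + x.val = l := by
  have h := val_sub_add (0 : ZMod l) x
  simpa using h

lemma cd_eq (i j : ZMod l) : cd l i j = min (j - i).val (-(j - i)).val := by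
  have : i - j = -(j - i) := by ring
  rw [cd, this]

lemma cA (h3 : 3 ≤ l) (i j : ZMod l) :
    cd l i j < cd l (i + 1) j ↔ (i - j).val < l / 2 := by
  haveI : Fact (1 < l) := ⟨by omega⟩
  rw [cd_eq, cd_eq]
  have r1 : j - (i + 1) = (j - i) - 1 := by ring
  have r2 : i - j = -(j - i) := by ring
  rw [r1, r2]
  set d := j - i with hd
  have e1 := val_sub_add d 1
  have n1 := val_neg_add d
  have n2 := val_neg_add (d - 1)
  have b1 := ZMod.val_lt d; have b2 := ZMod.val_lt (-d)
  have b3 := ZMod.val_lt (d - 1); have b4 := ZMod.val_lt (-(d - 1))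
  rw [ZMod.val_one] at e1
  omega

lemma cB (h3 : 3 ≤ l) (i j : ZMod l) :
    cd l (i + 1) j < cd l i j ↔ (j - (i + 1)).val < l / 2 := by
  haveI : Fact (1 < l) := ⟨by omega⟩
  rw [cd_eq, cd_eq]
  have r1 : j - (i + 1) = (j - i) - 1 := by ring
  rw [r1]
  set d := j - i with hd
  have e1 := val_sub_add d 1
  have n1 := val_neg_add d
  have n2 := val_neg_add (d - 1)
  have b1 := ZMod.val_lt d; have b2 := ZMod.val_lt (-d)
  have b3 := ZMod.val_lt (d - 1); have b4 := ZMod.val_lt (-(d - 1))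
  rw [ZMod.val_one] at e1
  omega

lemma cStep (h3 : 3 ≤ l) (i t : ZMod l) : cd l i (t + 1) ≤ cd l i t + 1 := by
  haveI : Fact (1 < l) := ⟨by omega⟩
  rw [cd_eq, cd_eq]
  have r1 : t + 1 - i = (t - i) + 1 := by ring
  rw [r1]
  set d := t - i with hd
  have e1 := val_add_add d 1
  have n1 := val_neg_add d
  have n2 := val_neg_add (d + 1)
  have b1 := ZMod.val_lt d; have b2 := ZMod.val_lt (-d)
  have b3 := ZMod.val_lt (d + 1); have b4 := ZMod.val_lt (-(d + 1))
  rw [ZMod.val_one] at e1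
  omega

lemma cStep' (h3 : 3 ≤ l) (i t : ZMod l) : cd l i t ≤ cd l i (t + 1) + 1 := by
  haveI : Fact (1 < l) := ⟨by omega⟩
  rw [cd_eq, cd_eq]
  have r1 : t + 1 - i = (t - i) + 1 := by ring
  rw [r1]
  set d := t - i with hd
  have e1 := val_add_add d 1
  have n1 := val_neg_add d
  have n2 := val_neg_add (d + 1)
  have b1 := ZMod.val_lt d; have b2 := ZMod.val_lt (-d)
  have b3 := ZMod.val_lt (d + 1); have b4 := ZMod.val_lt (-(d + 1))
  rw [ZMod.val_one] at e1
  omega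

lemma cSelf (i : ZMod l) : cd l i i = 0 := by simp [cd]

lemma cEdgeA (h3 : 3 ≤ l) (i t : ZMod l) :
    min (cd l i t) (cd l i (t + 1)) < min (cd l (i + 1) t) (cd l (i + 1) (t + 1)) ↔
      1 ≤ (i - t).val ∧ (i - t).val ≤ (l - 1) / 2 := by
  haveI : Fact (1 < l) := ⟨by omega⟩
  rw [cd_eq, cd_eq, cd_eq, cd_eq]
  have r1 : t + 1 - i = (t - i) + 1 := by ring
  have r2 : t - (i + 1) = (t - i) - 1 := by ring
  have r3 : t + 1 - (i + 1) = t - i := by ring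
  have r4 : i - t = -(t - i) := by ring
  rw [r1, r2, r3, r4]
  set d := t - i with hd
  have e1 := val_add_add d 1
  have e2 := val_sub_add d 1
  have n1 := val_neg_add d
  have n2 := val_neg_add (d + 1)
  have n3 := val_neg_add (d - 1)
  have b1 := ZMod.val_lt d; have b2 := ZMod.val_lt (-d)
  have b3 := ZMod.val_lt (d + 1); have b4 := ZMod.val_lt (-(d + 1))
  have b5 := ZMod.val_lt (d - 1); have b6 := ZMod.val_lt (-(d - 1))
  rw [ZMod.val_one] at e1 e2
  omega

lemma cEdgeB (h3 : 3 ≤ l) (i t : ZMod l) :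
    min (cd l (i + 1) t) (cd l (i + 1) (t + 1)) < min (cd l i t) (cd l i (t + 1)) ↔
      1 ≤ (t - i).val ∧ (t - i).val ≤ (l - 1) / 2 := by
  haveI : Fact (1 < l) := ⟨by omega⟩
  rw [cd_eq, cd_eq, cd_eq, cd_eq]
  have r1 : t + 1 - i = (t - i) + 1 := by ring
  have r2 : t - (i + 1) = (t - i) - 1 := by ring
  have r3 : t + 1 - (i + 1) = t - i := by ring
  rw [r1, r2, r3]
  set d := t - i with hd
  have e1 := val_add_add d 1
  have e2 := val_sub_add d 1
  have n1 := val_neg_add d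
  have n2 := val_neg_add (d + 1)
  have n3 := val_neg_add (d - 1)
  have b1 := ZMod.val_lt d; have b2 := ZMod.val_lt (-d)
  have b3 := ZMod.val_lt (d + 1); have b4 := ZMod.val_lt (-(d + 1))
  have b5 := ZMod.val_lt (d - 1); have b6 := ZMod.val_lt (-(d - 1))
  rw [ZMod.val_one] at e1 e2
  omega

lemma winB (h3 : 3 ≤ l) (i x : ZMod l) :
    (x - (i + 1)).val < l / 2 ↔ (i + ((l / 2 : ℕ) : ZMod l) - x).val < l / 2 := by
  haveI : Fact (1 < l) := ⟨by omega⟩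
  have r1 : i + ((l / 2 : ℕ) : ZMod l) - x = (((l / 2 : ℕ) : ZMod l) - 1) - (x - (i + 1)) := by
    ring
  rw [r1]
  set c : ZMod l := ((l / 2 : ℕ) : ZMod l) with hc
  set u := x - (i + 1) with hu
  have hcv : c.val = l / 2 := ZMod.val_natCast_of_lt (by omega)
  have e1 := val_sub_add c 1
  have e2 := val_sub_add (c - 1) u
  have b1 := ZMod.val_lt u; have b2 := ZMod.val_lt (c - 1)
  have b3 := ZMod.val_lt (c - 1 - u)
  rw [ZMod.val_one] at e1
  omega

end SzProof
section StructPart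

variable {V : Type*} {G : SimpleGraph V} {l : ℕ} {v : ZMod l → V}

/-- the component index of a vertex -/
noncomputable def phi (G : SimpleGraph V) (l : ℕ) (v : ZMod l → V)
    (hcover : ∀ w : V, ∃ i : ZMod l, (offCycle G l v).Reachable (v i) w) (w : V) : ZMod l :=
  Classical.choose (hcover w)

variable (hcover : ∀ w : V, ∃ i : ZMod l, (offCycle G l v).Reachable (v i) w)
variable (hsep : ∀ i j : ZMod l, (offCycle G l v).Reachable (v i) (v j) → i = j)

lemma phi_reach (w : V) : (offCycle G l v).Reachable (v (phi G l v hcover w)) w :=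
  Classical.choose_spec (hcover w)

include hsep in
lemma phi_eq_iff (w : V) (j : ZMod l) :
    phi G l v hcover w = j ↔ (offCycle G l v).Reachable (v j) w := by
  constructor
  · rintro rfl; exact phi_reach hcover w
  · intro h
    exact hsep _ _ ((phi_reach hcover w).trans h.symm)

include hsep in
lemma phi_v (i : ZMod l) : phi G l v hcover (v i) = i :=
  (phi_eq_iff hcover hsep _ _).mpr (SimpleGraph.Reachable.refl _)

lemma adj_cases {x y : V} (hxy : G.Adj x y) :
    (offCycle G l v).Adj x y ∨ ∃ t : ZMod l,
      (x = v t ∧ y = v (t + 1)) ∨ (y = v t ∧ x = v (t + 1)) := by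
  by_cases h : s(x, y) ∈ {e : Sym2 V | ∃ i : ZMod l, e = s(v i, v (i + 1))}
  · right
    obtain ⟨t, ht⟩ := h
    rw [Sym2.eq_iff] at ht
    exact ⟨t, by tauto⟩
  · left
    rw [offCycle, SimpleGraph.deleteEdges_adj]
    exact ⟨hxy, h⟩

include hsep in
lemma phi_off_adj {x y : V} (hxy : (offCycle G l v).Adj x y) :
    phi G l v hcover x = phi G l v hcover y := by
  apply hsep
  exact ((phi_reach hcover x).trans hxy.reachable).trans (phi_reach hcover y).symm

/-- the potential function: distance from `v i` -/
noncomputable def psi (i : ZMod l) (w : V) : ℕ :=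
  SzProof.cd l i (phi G l v hcover w) +
    (offCycle G l v).dist (v (phi G l v hcover w)) w

include hsep in
lemma psi_v (i j : ZMod l) : psi hcover i (v j) = SzProof.cd l i j := by
  rw [psi, phi_v hcover hsep]; simp

include hsep in
lemma psi_step [NeZero l] (h3 : 3 ≤ l) {x y : V} (hxy : G.Adj x y) (i : ZMod l) :
    psi hcover i y ≤ psi hcover i x + 1 := by
  rcases adj_cases hxy with hoff | ⟨t, ⟨hx, hy⟩ | ⟨hy, hx⟩⟩
  · have hphi : phi G l v hcover y = phi G l v hcover x :=
      (phi_off_adj hcover hsep hoff).symm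
    rw [psi, psi, hphi]
    have h1 : (offCycle G l v).dist (v (phi G l v hcover x)) y ≤
        (offCycle G l v).dist (v (phi G l v hcover x)) x + 1 := by
      obtain ⟨p, hp⟩ := (phi_reach hcover x).exists_walk_length_eq_dist
      calc (offCycle G l v).dist (v (phi G l v hcover x)) y ≤ (p.concat hoff).length :=
            SimpleGraph.dist_le _
        _ = _ := by rw [SimpleGraph.Walk.length_concat, hp]
    omega
  · subst hx hy
    rw [psi_v hcover hsep, psi_v hcover hsep]
    exact SzProof.cStep h3 i t
  · subst hx hy
    rw [psi_v hcover hsep, psi_v hcover hsep]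
    exact SzProof.cStep' h3 i t

include hsep in
lemma psi_walk [NeZero l] (h3 : 3 ≤ l) {x w : V} (p : G.Walk x w) (i : ZMod l) :
    psi hcover i w ≤ psi hcover i x + p.length := by
  induction p with
  | nil => simp
  | @cons a b c hab q ih =>
    have := psi_step hcover hsep h3 hab i
    rw [SimpleGraph.Walk.length_cons]
    omega

lemma exists_cycle_walk (hadj : ∀ i : ZMod l, G.Adj (v i) (v (i + 1))) (i : ZMod l) (s : ℕ) :
    ∃ p : G.Walk (v i) (v (i + (s : ZMod l))), p.length = s := by
  induction s with
  | zero =>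
    have h0 : i = i + ((0 : ℕ) : ZMod l) := by push_cast; ring
    exact ⟨SimpleGraph.Walk.nil.copy rfl (congrArg v h0), by simp⟩
  | succ s ih =>
    obtain ⟨p, hp⟩ := ih
    have hs : i + (s : ZMod l) + 1 = i + ((s + 1 : ℕ) : ZMod l) := by push_cast; ring
    exact ⟨(p.concat (hadj (i + (s : ZMod l)))).copy rfl (congrArg v hs), by
      simp [SimpleGraph.Walk.length_copy, SimpleGraph.Walk.length_concat, hp]⟩

lemma dist_v_le [NeZero l] (hadj : ∀ i : ZMod l, G.Adj (v i) (v (i + 1))) (i j : ZMod l) :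
    G.dist (v i) (v j) ≤ SzProof.cd l i j := by
  have h1 : G.dist (v i) (v j) ≤ (j - i).val := by
    obtain ⟨p, hp⟩ := exists_cycle_walk hadj i (j - i).val
    have he : i + (((j - i).val : ℕ) : ZMod l) = j := by rw [ZMod.natCast_zmod_val]; ring
    exact le_trans (SimpleGraph.dist_le (p.copy rfl (congrArg v he)))
      (by rw [SimpleGraph.Walk.length_copy, hp])
  have h2 : G.dist (v i) (v j) ≤ (i - j).val := by
    obtain ⟨p, hp⟩ := exists_cycle_walk hadj j (i - j).val
    have he : j + (((i - j).val : ℕ) : ZMod l) = i := by rw [ZMod.natCast_zmod_val]; ring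
    rw [SimpleGraph.dist_comm]
    exact le_trans (SimpleGraph.dist_le (p.copy rfl (congrArg v he)))
      (by rw [SimpleGraph.Walk.length_copy, hp])
  exact le_min h1 h2

include hsep in
lemma dist_formula [NeZero l] (h3 : 3 ≤ l) (hconn : G.Connected)
    (hadj : ∀ i : ZMod l, G.Adj (v i) (v (i + 1))) (i : ZMod l) (w : V) :
    G.dist (v i) w = SzProof.cd l i (phi G l v hcover w) +
      (offCycle G l v).dist (v (phi G l v hcover w)) w := by
  apply le_antisymm
  · refine le_trans hconn.dist_triangle (add_le_add (dist_v_le hadj i _) ?_)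
    obtain ⟨p, hp⟩ := (phi_reach hcover w).exists_walk_length_eq_dist
    have hle : offCycle G l v ≤ G := by
      simp only [offCycle]; exact SimpleGraph.deleteEdges_le _
    refine le_trans (SimpleGraph.dist_le (p.mapLe hle)) ?_
    rw [SimpleGraph.Walk.length_map]
    exact hp.le
  · obtain ⟨p, hp⟩ := (hconn (v i) w).exists_walk_length_eq_dist
    have := psi_walk hcover hsep h3 p i
    rw [psi_v hcover hsep, SzProof.cSelf, hp] at this
    simpa [psi] using this

end StructPart
section CountPart

variable {V : Type*} [Fintype V] {G : SimpleGraph V} {l : ℕ} {v : ZMod l → V}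

lemma ncard_filter {α : Type*} [Fintype α] (p : α → Prop) :
    {x | p x}.ncard = (Finset.univ.filter p).card := by
  rw [Set.ncard_eq_toFinset_card', Set.toFinset_setOf]

lemma ncard_window {α : Type*} [Fintype α] {l : ℕ} [NeZero l] (f : α → ZMod l)
    (p : α → Prop) (i : ZMod l) {k : ℕ} (hk : k ≤ l) :
    {a | p a ∧ (i - f a).val < k}.ncard
      = ∑ t ∈ Finset.range k, {a | p a ∧ f a = i - (t : ℕ)}.ncard := by
  induction k with
  | zero => simp
  | succ k ih =>
    have hsplit : {a | p a ∧ (i - f a).val < k + 1}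
        = {a | p a ∧ (i - f a).val < k} ∪ {a | p a ∧ f a = i - ((k : ℕ) : ZMod l)} := by
      ext a
      simp only [Set.mem_setOf_eq, Set.mem_union]
      constructor
      · rintro ⟨hp, hlt⟩
        rcases Nat.lt_or_ge (i - f a).val k with h | h
        · exact Or.inl ⟨hp, h⟩
        · refine Or.inr ⟨hp, ?_⟩
          have hv : (i - f a).val = k := by omega
          have := congrArg (fun z : ℕ => (z : ZMod l)) hv
          simp only [ZMod.natCast_zmod_val] at this
          rw [← this]; ring
      · rintro (⟨hp, hlt⟩ | ⟨hp, heq⟩)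
        · exact ⟨hp, by omega⟩
        · refine ⟨hp, ?_⟩
          rw [heq]
          have h2 : i - (i - ((k : ℕ) : ZMod l)) = ((k : ℕ) : ZMod l) := by ring
          rw [h2, ZMod.val_natCast_of_lt (by omega)]
          omega
    have hdisj : Disjoint {a | p a ∧ (i - f a).val < k}
        {a | p a ∧ f a = i - ((k : ℕ) : ZMod l)} := by
      refine Set.disjoint_left.mpr ?_
      rintro a ⟨hp, hlt⟩ ⟨_, heq⟩
      rw [heq] at hlt
      have h2 : i - (i - ((k : ℕ) : ZMod l)) = ((k : ℕ) : ZMod l) := by ring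
      rw [h2, ZMod.val_natCast_of_lt (by omega)] at hlt
      omega
    rw [hsplit, Set.ncard_union_eq hdisj (Set.toFinite _) (Set.toFinite _),
      Finset.sum_range_succ, ih (by omega)]

variable (hcover : ∀ w : V, ∃ i : ZMod l, (offCycle G l v).Reachable (v i) w)
variable (hsep : ∀ i j : ZMod l, (offCycle G l v).Reachable (v i) (v j) → i = j)

include hsep in
lemma compV_fiber [NeZero l] (j : ZMod l) :
    compV G l v j = {w | phi G l v hcover w = j}.ncard := by
  rw [compV]
  congr 1
  ext w
  exact (phi_eq_iff hcover hsep w j).symm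

include hcover hsep in
lemma szN_window [NeZero l] (h3 : 3 ≤ l) (hconn : G.Connected)
    (hadj : ∀ i : ZMod l, G.Adj (v i) (v (i + 1))) (i : ZMod l) :
    szN G (v i) (v (i + 1)) = ∑ t ∈ Finset.range (l / 2), compV G l v (i - (t : ℕ)) := by
  rw [szN]
  have hset : {w | G.dist (v i) w < G.dist (v (i + 1)) w}
      = {w | True ∧ (i - phi G l v hcover w).val < l / 2} := by
    ext w
    simp only [Set.mem_setOf_eq, true_and]
    rw [dist_formula hcover hsep h3 hconn hadj i w,
      dist_formula hcover hsep h3 hconn hadj (i + 1) w,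
      Nat.add_lt_add_iff_right, SzProof.cA h3]
  rw [hset, ncard_window (phi G l v hcover) (fun _ => True) i (Nat.div_le_self l 2)]
  refine Finset.sum_congr rfl fun t _ => ?_
  rw [compV_fiber hcover hsep]
  congr 1
  ext w
  simp

include hcover hsep in
lemma szN_window' [NeZero l] (h3 : 3 ≤ l) (hconn : G.Connected)
    (hadj : ∀ i : ZMod l, G.Adj (v i) (v (i + 1))) (i : ZMod l) :
    szN G (v (i + 1)) (v i) =
      ∑ t ∈ Finset.range (l / 2), compV G l v (i + ((l / 2 : ℕ) : ZMod l) - (t : ℕ)) := by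
  rw [szN]
  have hset : {w | G.dist (v (i + 1)) w < G.dist (v i) w}
      = {w | True ∧ ((i + ((l / 2 : ℕ) : ZMod l)) - phi G l v hcover w).val < l / 2} := by
    ext w
    simp only [Set.mem_setOf_eq, true_and]
    rw [dist_formula hcover hsep h3 hconn hadj i w,
      dist_formula hcover hsep h3 hconn hadj (i + 1) w,
      Nat.add_lt_add_iff_right, SzProof.cB h3, SzProof.winB h3]
  rw [hset, ncard_window (phi G l v hcover) (fun _ => True) _ (Nat.div_le_self l 2)]
  refine Finset.sum_congr rfl fun t _ => ?_
  rw [compV_fiber hcover hsep]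
  congr 1
  ext w
  simp

/-- component index of an edge -/
noncomputable def phiE (G : SimpleGraph V) (l : ℕ) (v : ZMod l → V)
    (hcover : ∀ w : V, ∃ i : ZMod l, (offCycle G l v).Reachable (v i) w) :
    Sym2 V → ZMod l :=
  Sym2.lift ⟨fun x y => if phi G l v hcover x = phi G l v hcover y
      then phi G l v hcover x else 0, by
    intro x y
    dsimp only
    by_cases h : phi G l v hcover x = phi G l v hcover y
    · rw [if_pos h, if_pos h.symm, h]
    · rw [if_neg h, if_neg (Ne.symm h)]⟩

include hsep in
lemma phiE_off {x y : V} (hxy : (offCycle G l v).Adj x y) :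
    phiE G l v hcover s(x, y) = phi G l v hcover x := by
  have h := phi_off_adj hcover hsep hxy
  simp only [phiE, Sym2.lift_mk]
  rw [if_pos h]

lemma eDist_mk (G : SimpleGraph V) (x y w : V) :
    eDist G s(x, y) w = min (G.dist w x) (G.dist w y) := by
  simp only [eDist, Sym2.lift_mk]
  rw [SimpleGraph.dist_comm (u := x) (v := w), SimpleGraph.dist_comm (u := y) (v := w)]

include hcover hsep in
lemma eDist_cyc [NeZero l] (h3 : 3 ≤ l) (hconn : G.Connected)
    (hadj : ∀ i : ZMod l, G.Adj (v i) (v (i + 1))) (t j : ZMod l) :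
    eDist G s(v t, v (t + 1)) (v j) = min (SzProof.cd l j t) (SzProof.cd l j (t + 1)) := by
  rw [eDist_mk, dist_formula hcover hsep h3 hconn hadj j (v t),
    dist_formula hcover hsep h3 hconn hadj j (v (t + 1)),
    phi_v hcover hsep, phi_v hcover hsep, SimpleGraph.dist_self, SimpleGraph.dist_self]
  omega

include hsep in
lemma off_closer [NeZero l] (h3 : 3 ≤ l) (hconn : G.Connected)
    (hadj : ∀ i : ZMod l, G.Adj (v i) (v (i + 1))) {x y : V}
    (hxy : (offCycle G l v).Adj x y) (i : ZMod l) :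
    (eDist G s(x, y) (v i) < eDist G s(x, y) (v (i + 1))) ↔
      (i - phiE G l v hcover s(x, y)).val < l / 2 := by
  rw [eDist_mk, eDist_mk, phiE_off hcover hsep hxy,
    dist_formula hcover hsep h3 hconn hadj i x,
    dist_formula hcover hsep h3 hconn hadj i y,
    dist_formula hcover hsep h3 hconn hadj (i + 1) x,
    dist_formula hcover hsep h3 hconn hadj (i + 1) y,
    phi_off_adj hcover hsep hxy, ← SzProof.cA h3 i (phi G l v hcover y)]
  omega

include hsep in
lemma off_closer' [NeZero l] (h3 : 3 ≤ l) (hconn : G.Connected)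
    (hadj : ∀ i : ZMod l, G.Adj (v i) (v (i + 1))) {x y : V}
    (hxy : (offCycle G l v).Adj x y) (i : ZMod l) :
    (eDist G s(x, y) (v (i + 1)) < eDist G s(x, y) (v i)) ↔
      ((i + ((l / 2 : ℕ) : ZMod l)) - phiE G l v hcover s(x, y)).val < l / 2 := by
  rw [eDist_mk, eDist_mk, phiE_off hcover hsep hxy,
    dist_formula hcover hsep h3 hconn hadj i x,
    dist_formula hcover hsep h3 hconn hadj i y,
    dist_formula hcover hsep h3 hconn hadj (i + 1) x,
    dist_formula hcover hsep h3 hconn hadj (i + 1) y,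
    phi_off_adj hcover hsep hxy, ← SzProof.winB h3, ← SzProof.cB h3 i (phi G l v hcover y)]
  omega

lemma edge_split (hadj : ∀ i : ZMod l, G.Adj (v i) (v (i + 1))) (e : Sym2 V) :
    e ∈ G.edgeSet ↔ (e ∈ (offCycle G l v).edgeSet ∨ ∃ t : ZMod l, e = s(v t, v (t + 1))) := by
  have hset : (offCycle G l v).edgeSet =
      G.edgeSet \ {e : Sym2 V | ∃ i : ZMod l, e = s(v i, v (i + 1))} := by
    simp only [offCycle]
    exact SimpleGraph.edgeSet_deleteEdges _
  constructor
  · intro he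
    by_cases h : ∃ t : ZMod l, e = s(v t, v (t + 1))
    · exact Or.inr h
    · exact Or.inl (by rw [hset]; exact ⟨he, h⟩)
  · rintro (he | ⟨t, rfl⟩)
    · rw [hset] at he; exact he.1
    · exact (hadj t)

lemma edge_not_both (e : Sym2 V) (he : e ∈ (offCycle G l v).edgeSet) :
    ¬ ∃ t : ZMod l, e = s(v t, v (t + 1)) := by
  have hset : (offCycle G l v).edgeSet =
      G.edgeSet \ {e : Sym2 V | ∃ i : ZMod l, e = s(v i, v (i + 1))} := by
    simp only [offCycle]
    exact SimpleGraph.edgeSet_deleteEdges _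
  rw [hset] at he
  exact he.2

lemma cyc_edge_inj (h3 : 3 ≤ l) (hinj : Function.Injective v) {t s : ZMod l}
    (h : s(v t, v (t + 1)) = s(v s, v (s + 1))) : t = s := by
  haveI : NeZero l := ⟨by omega⟩
  rw [Sym2.eq_iff] at h
  rcases h with ⟨h1, h2⟩ | ⟨h1, h2⟩
  · exact hinj h1
  · have e1 : t = s + 1 := hinj h1
    have e2 : t + 1 = s := hinj h2
    exfalso
    have hz : ((2 : ℕ) : ZMod l) = 0 := by
      push_cast
      linear_combination e2 - e1
    rw [ZMod.natCast_eq_zero_iff] at hz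
    have := Nat.le_of_dvd (by norm_num) hz
    omega

include hsep in
lemma compE_fiber [NeZero l] (j : ZMod l) :
    compE G l v j =
      {e : Sym2 V | e ∈ (offCycle G l v).edgeSet ∧ phiE G l v hcover e = j}.ncard := by
  rw [compE]
  congr 1
  ext e
  simp only [Set.mem_setOf_eq]
  constructor
  · rintro ⟨he, hall⟩
    refine ⟨he, ?_⟩
    induction e with
    | _ x y =>
      have hxy : (offCycle G l v).Adj x y := he
      rw [phiE_off hcover hsep hxy]
      exact (phi_eq_iff hcover hsep x j).mpr (hall x (Sym2.mem_mk_left x y))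
  · rintro ⟨he, hphi⟩
    refine ⟨he, ?_⟩
    induction e with
    | _ x y =>
      have hxy : (offCycle G l v).Adj x y := he
      rw [phiE_off hcover hsep hxy] at hphi
      intro w hw
      rcases Sym2.mem_iff.mp hw with rfl | rfl
      · exact (phi_eq_iff hcover hsep w j).mp hphi
      · exact (phi_eq_iff hcover hsep w j).mp
          ((phi_off_adj hcover hsep hxy).symm.trans hphi)

/-- counting the cycle edges strictly closer to one endpoint -/
lemma cyc_count [NeZero l] (h3 : 3 ≤ l) (hinj : Function.Injective v) (i : ZMod l)
    (P : Sym2 V → Prop)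
    (hP : ∀ t : ZMod l, P s(v t, v (t + 1)) ↔
      (1 ≤ (i - t).val ∧ (i - t).val ≤ (l - 1) / 2)) :
    {e : Sym2 V | (∃ t : ZMod l, e = s(v t, v (t + 1))) ∧ P e}.ncard = (l - 1) / 2 := by
  have himg : {e : Sym2 V | (∃ t : ZMod l, e = s(v t, v (t + 1))) ∧ P e}
      = (fun a : ℕ => s(v (i - ((a + 1 : ℕ) : ZMod l)), v (i - ((a + 1 : ℕ) : ZMod l) + 1))) ''
        {a : ℕ | a < (l - 1) / 2} := by
    ext e
    simp only [Set.mem_setOf_eq, Set.mem_image]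
    constructor
    · rintro ⟨⟨t, rfl⟩, hp⟩
      rw [hP t] at hp
      refine ⟨(i - t).val - 1, by omega, ?_⟩
      have : ((((i - t).val - 1) + 1 : ℕ) : ZMod l) = i - t := by
        have h1 : ((i - t).val - 1) + 1 = (i - t).val := by omega
        rw [h1, ZMod.natCast_zmod_val]
      rw [this]
      congr 2 <;> ring
    · rintro ⟨a, ha, rfl⟩
      refine ⟨⟨_, rfl⟩, ?_⟩
      rw [hP]
      have hlt : a + 1 < l := by
        have := Nat.div_le_self (l - 1) 2
        omega
      have : (i - (i - ((a + 1 : ℕ) : ZMod l))) = ((a + 1 : ℕ) : ZMod l) := by ring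
      rw [this, ZMod.val_natCast_of_lt hlt]
      omega
  rw [himg, Set.ncard_image_of_injOn, show {a : ℕ | a < (l - 1) / 2}
      = ↑(Finset.range ((l - 1) / 2)) from by ext; simp, Set.ncard_coe_finset,
    Finset.card_range]
  intro a ha b hb hab
  simp only [Set.mem_setOf_eq] at ha hb
  have h2 := cyc_edge_inj h3 hinj hab
  have h3' : ((a + 1 : ℕ) : ZMod l) = ((b + 1 : ℕ) : ZMod l) := sub_right_inj.mp h2
  have hl : (l - 1) / 2 < l := by omega
  have := congrArg ZMod.val h3'
  rwa [ZMod.val_natCast_of_lt (by omega), ZMod.val_natCast_of_lt (by omega),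
    Nat.add_right_cancel_iff] at this

include hsep in
lemma szM_split [NeZero l] (h3 : 3 ≤ l) (hinj : Function.Injective v)
    (hconn : G.Connected) (hadj : ∀ i : ZMod l, G.Adj (v i) (v (i + 1)))
    (c : ZMod l) (i : ZMod l) (u u' : V)
    (hoff : ∀ {x y : V}, (offCycle G l v).Adj x y →
      ((eDist G s(x, y) u < eDist G s(x, y) u') ↔
        (c - phiE G l v hcover s(x, y)).val < l / 2))
    (hcycP : ∀ t : ZMod l, (eDist G s(v t, v (t + 1)) u < eDist G s(v t, v (t + 1)) u') ↔
      (1 ≤ (i - t).val ∧ (i - t).val ≤ (l - 1) / 2)) :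
    szM G u u' = (∑ t ∈ Finset.range (l / 2), compE G l v (c - (t : ℕ))) + (l - 1) / 2 := by
  rw [szM]
  have hsplit : {e : Sym2 V | e ∈ G.edgeSet ∧ eDist G e u < eDist G e u'}
      = {e : Sym2 V | (e ∈ (offCycle G l v).edgeSet) ∧
          (c - phiE G l v hcover e).val < l / 2}
        ∪ {e : Sym2 V | (∃ t : ZMod l, e = s(v t, v (t + 1))) ∧
            eDist G e u < eDist G e u'} := by
    ext e
    simp only [Set.mem_setOf_eq, Set.mem_union]
    constructor
    · rintro ⟨he, hlt⟩
      rcases (edge_split hadj e).mp he with hoffe | hcyce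
      · left
        refine ⟨hoffe, ?_⟩
        induction e with
        | _ x y => exact (hoff hoffe).mp hlt
      · right; exact ⟨hcyce, hlt⟩
    · rintro (⟨hoffe, hwin⟩ | ⟨hcyce, hlt⟩)
      · refine ⟨(edge_split hadj e).mpr (Or.inl hoffe), ?_⟩
        induction e with
        | _ x y => exact (hoff hoffe).mpr hwin
      · exact ⟨(edge_split hadj e).mpr (Or.inr hcyce), hlt⟩
  rw [hsplit, Set.ncard_union_eq ?hdisj (Set.toFinite _) (Set.toFinite _)]
  case hdisj =>
    refine Set.disjoint_left.mpr ?_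
    rintro e ⟨he, _⟩ ⟨hc, _⟩
    exact edge_not_both e he hc
  congr 1
  · rw [ncard_window (phiE G l v hcover) (fun e => e ∈ (offCycle G l v).edgeSet) c
      (Nat.div_le_self l 2)]
    exact Finset.sum_congr rfl fun t _ => (compE_fiber hcover hsep _).symm
  · exact cyc_count h3 hinj i _ (fun t => hcycP t)

end CountPart
namespace SzProof
variable {l : ℕ} [NeZero l]

lemma winC (h3 : 3 ≤ l) (i t : ZMod l) :
    (1 ≤ (t - i).val ∧ (t - i).val ≤ (l - 1) / 2) ↔
      (1 ≤ ((i + (((l - 1) / 2 + 1 : ℕ) : ZMod l)) - t).val ∧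
        ((i + (((l - 1) / 2 + 1 : ℕ) : ZMod l)) - t).val ≤ (l - 1) / 2) := by
  have r1 : (i + (((l - 1) / 2 + 1 : ℕ) : ZMod l)) - t
      = (((l - 1) / 2 + 1 : ℕ) : ZMod l) - (t - i) := by ring
  rw [r1]
  set c : ZMod l := (((l - 1) / 2 + 1 : ℕ) : ZMod l) with hc
  set u := t - i with hu
  have hcv : c.val = (l - 1) / 2 + 1 := ZMod.val_natCast_of_lt (by omega)
  have e1 := val_sub_add c u
  have b1 := ZMod.val_lt u; have b2 := ZMod.val_lt (c - u)
  omega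

end SzProof

section TotPart

variable {V : Type*} [Fintype V] {G : SimpleGraph V} {l : ℕ} {v : ZMod l → V}

lemma sum_range_univ [NeZero l] (g : ZMod l → ℕ) :
    ∑ i ∈ Finset.range l, g ((i : ℕ) : ZMod l) = ∑ j : ZMod l, g j := by
  apply Finset.sum_nbij' (fun i => ((i : ℕ) : ZMod l)) (fun j => j.val)
  · intro a _; exact Finset.mem_univ _
  · intro j _; exact Finset.mem_range.mpr (ZMod.val_lt j)
  · intro a ha; exact ZMod.val_natCast_of_lt (Finset.mem_range.mp ha)
  · intro j _; exact ZMod.natCast_zmod_val j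
  · intro a _
    rfl

lemma sum_shift [NeZero l] (g : ZMod l → ℕ) (s : ZMod l) :
    ∑ j : ZMod l, g (j + s) = ∑ j : ZMod l, g j :=
  Fintype.sum_bijective (· + s) (Equiv.addRight s).bijective _ _ (fun _ => rfl)

lemma sum_shift_sub [NeZero l] (g : ZMod l → ℕ) (s : ZMod l) :
    ∑ j : ZMod l, g (j - s) = ∑ j : ZMod l, g j :=
  Fintype.sum_bijective (· - s) (Equiv.subRight s).bijective _ _ (fun _ => rfl)

lemma ncard_fiber_sum {α β : Type*} [Fintype α] (f : α → β) (s : Finset β) :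
    ∑ b ∈ s, {a | f a = b}.ncard = {a | f a ∈ s}.ncard := by
  induction s using Finset.cons_induction with
  | empty => simp
  | cons b s hb ih =>
    rw [Finset.sum_cons, ih]
    have hsplit : {a | f a ∈ Finset.cons b s hb}
        = {a | f a = b} ∪ {a | f a ∈ s} := by
      ext a; simp [Finset.mem_cons]
    rw [hsplit, Set.ncard_union_eq ?_ (Set.toFinite _) (Set.toFinite _)]
    refine Set.disjoint_left.mpr ?_
    rintro a rfl hmem
    exact hb hmem

variable (hcover : ∀ w : V, ∃ i : ZMod l, (offCycle G l v).Reachable (v i) w)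
variable (hsep : ∀ i j : ZMod l, (offCycle G l v).Reachable (v i) (v j) → i = j)

include hcover hsep in
lemma sum_compV [NeZero l] : ∑ j : ZMod l, compV G l v j = Fintype.card V := by
  have h1 : ∀ j : ZMod l, compV G l v j = {w | phi G l v hcover w = j}.ncard :=
    compV_fiber hcover hsep
  simp only [h1]
  rw [ncard_fiber_sum (phi G l v hcover) Finset.univ]
  simp only [Finset.mem_univ, Set.setOf_true, Set.ncard_univ, Nat.card_eq_fintype_card]

lemma compV_pos (j : ZMod l) : 1 ≤ compV G l v j := by
  rw [compV]
  have : 0 < {w | (offCycle G l v).Reachable (v j) w}.ncard :=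
    (Set.ncard_pos (Set.toFinite _)).mpr ⟨v j, SimpleGraph.Reachable.refl _⟩
  omega

lemma compE_pos_of_two_le_compV {j : ZMod l} (h : 2 ≤ compV G l v j) :
    1 ≤ compE G l v j := by
  rw [compV] at h
  have h2 : 1 < {w | (offCycle G l v).Reachable (v j) w}.ncard := h
  obtain ⟨a, b, ha, hb, hab⟩ := (Set.one_lt_ncard_iff (Set.toFinite _)).mp h2
  simp only [Set.mem_setOf_eq] at ha hb
  -- one of a, b differs from v j
  have key : ∃ c : V, c ≠ v j ∧ (offCycle G l v).Reachable (v j) c := by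
    by_cases hja : a = v j
    · exact ⟨b, by rintro rfl; exact hab (hja ▸ rfl), hb⟩
    · exact ⟨a, hja, ha⟩
  obtain ⟨c, hc, hreach⟩ := key
  obtain ⟨p⟩ := hreach
  cases p with
  | nil => exact absurd rfl (Ne.symm hc)
  | @cons _ b' _ hadj q =>
    rw [compE]
    have hmem : s(v j, b') ∈ {e : Sym2 V | e ∈ (offCycle G l v).edgeSet ∧
        ∀ w ∈ e, (offCycle G l v).Reachable (v j) w} := by
      refine ⟨hadj, ?_⟩
      intro w hw
      rcases Sym2.mem_iff.mp hw with rfl | rfl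
      · exact SimpleGraph.Reachable.refl _
      · exact hadj.reachable
    have : 0 < {e : Sym2 V | e ∈ (offCycle G l v).edgeSet ∧
        ∀ w ∈ e, (offCycle G l v).Reachable (v j) w}.ncard :=
      (Set.ncard_pos (Set.toFinite _)).mpr ⟨_, hmem⟩
    omega

lemma two_le_compV_of_compE_pos {j : ZMod l} (h : 1 ≤ compE G l v j) :
    2 ≤ compV G l v j := by
  rw [compE] at h
  have h2 : 0 < {e : Sym2 V | e ∈ (offCycle G l v).edgeSet ∧
      ∀ w ∈ e, (offCycle G l v).Reachable (v j) w}.ncard := h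
  obtain ⟨e, he⟩ := (Set.ncard_pos (Set.toFinite _)).mp h2
  induction e with
  | _ x y =>
    obtain ⟨hadj, hall⟩ := he
    have hxy : (offCycle G l v).Adj x y := hadj
    have hx : (offCycle G l v).Reachable (v j) x := hall x (Sym2.mem_mk_left x y)
    have hy : (offCycle G l v).Reachable (v j) y := hall y (Sym2.mem_mk_right x y)
    rw [compV]
    have : 1 < {w | (offCycle G l v).Reachable (v j) w}.ncard :=
      (Set.one_lt_ncard_iff (Set.toFinite _)).mpr ⟨x, y, hx, hy, hxy.ne⟩
    omega

end TotPart
section FinalPart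

lemma final_algebra {l : ℕ} [NeZero l] (h3 : 3 ≤ l) (n m : ℕ) (X Y : ZMod l → ℕ)
    (hXpos : ∀ j : ZMod l, l / 2 ≤ X j)
    (hSX : ∑ j : ZMod l, X j = l / 2 * n)
    (hSY : ∑ j : ZMod l, Y j = l / 2 * m) :
    gVal n m l ≤ ((∑ j : ZMod l,
        (X j * (Y (j + ((l / 2 : ℕ) : ZMod l)) + (l - 1) / 2)
          + X (j + ((l / 2 : ℕ) : ZMod l)) * (Y j + (l - 1) / 2)) : ℕ) : ℤ)
    ∧ (((∑ j : ZMod l,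
        (X j * (Y (j + ((l / 2 : ℕ) : ZMod l)) + (l - 1) / 2)
          + X (j + ((l / 2 : ℕ) : ZMod l)) * (Y j + (l - 1) / 2)) : ℕ) : ℤ) = gVal n m l
      ↔ ∀ j : ZMod l, (X j = l / 2 ∨ Y (j + ((l / 2 : ℕ) : ZMod l)) = 0)
          ∧ (X (j + ((l / 2 : ℕ) : ZMod l)) = l / 2 ∨ Y j = 0)) := by
  have hSX' : ∑ j : ZMod l, X (j + ((l / 2 : ℕ) : ZMod l)) = l / 2 * n := by
    rw [sum_shift]; exact hSX
  have hSY' : ∑ j : ZMod l, Y (j + ((l / 2 : ℕ) : ZMod l)) = l / 2 * m := by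
    rw [sum_shift]; exact hSY
  have hSXz : ∑ j : ZMod l, (X j : ℤ) = ((l / 2 : ℕ) : ℤ) * n := by exact_mod_cast hSX
  have hSXz' : ∑ j : ZMod l, (X (j + ((l / 2 : ℕ) : ZMod l)) : ℤ) = ((l / 2 : ℕ) : ℤ) * n := by
    exact_mod_cast hSX'
  have hSYz : ∑ j : ZMod l, (Y j : ℤ) = ((l / 2 : ℕ) : ℤ) * m := by exact_mod_cast hSY
  have hSYz' : ∑ j : ZMod l, (Y (j + ((l / 2 : ℕ) : ZMod l)) : ℤ) = ((l / 2 : ℕ) : ℤ) * m := by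
    exact_mod_cast hSY'
  have hcast : ((∑ j : ZMod l,
      (X j * (Y (j + ((l / 2 : ℕ) : ZMod l)) + (l - 1) / 2)
        + X (j + ((l / 2 : ℕ) : ZMod l)) * (Y j + (l - 1) / 2)) : ℕ) : ℤ)
      = ∑ j : ZMod l,
        ((X j : ℤ) * ((Y (j + ((l / 2 : ℕ) : ZMod l)) : ℤ) + ((l - 1) / 2 : ℕ))
          + (X (j + ((l / 2 : ℕ) : ZMod l)) : ℤ) * ((Y j : ℤ) + ((l - 1) / 2 : ℕ))) := by
    push_cast
    rfl
  set D : ℤ := ∑ j : ZMod l,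
    (((X j : ℤ) - (l / 2 : ℕ)) * (Y (j + ((l / 2 : ℕ) : ZMod l)) : ℤ)
      + ((X (j + ((l / 2 : ℕ) : ZMod l)) : ℤ) - (l / 2 : ℕ)) * (Y j : ℤ)) with hD
  have hdiff : (∑ j : ZMod l,
        ((X j : ℤ) * ((Y (j + ((l / 2 : ℕ) : ZMod l)) : ℤ) + ((l - 1) / 2 : ℕ))
          + (X (j + ((l / 2 : ℕ) : ZMod l)) : ℤ) * ((Y j : ℤ) + ((l - 1) / 2 : ℕ)))) - D
      = 2 * ((l / 2 : ℕ) : ℤ) * ((l / 2 : ℕ) : ℤ) * m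
        + 2 * ((l / 2 : ℕ) : ℤ) * (((l - 1) / 2 : ℕ) : ℤ) * n := by
    rw [hD, ← Finset.sum_sub_distrib]
    have hterm : ∀ j : ZMod l,
        ((X j : ℤ) * ((Y (j + ((l / 2 : ℕ) : ZMod l)) : ℤ) + ((l - 1) / 2 : ℕ))
          + (X (j + ((l / 2 : ℕ) : ZMod l)) : ℤ) * ((Y j : ℤ) + ((l - 1) / 2 : ℕ)))
        - (((X j : ℤ) - (l / 2 : ℕ)) * (Y (j + ((l / 2 : ℕ) : ZMod l)) : ℤ)
          + ((X (j + ((l / 2 : ℕ) : ZMod l)) : ℤ) - (l / 2 : ℕ)) * (Y j : ℤ))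
        = ((l / 2 : ℕ) : ℤ) * (Y (j + ((l / 2 : ℕ) : ZMod l)) : ℤ)
          + ((l / 2 : ℕ) : ℤ) * (Y j : ℤ)
          + (((l - 1) / 2 : ℕ) : ℤ) * (X j : ℤ)
          + (((l - 1) / 2 : ℕ) : ℤ) * (X (j + ((l / 2 : ℕ) : ZMod l)) : ℤ) := by
      intro j; ring
    rw [Finset.sum_congr rfl (fun j _ => hterm j), Finset.sum_add_distrib,
      Finset.sum_add_distrib, Finset.sum_add_distrib, ← Finset.mul_sum, ← Finset.mul_sum,
      ← Finset.mul_sum, ← Finset.mul_sum, hSXz, hSXz', hSYz, hSYz']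
    ring
  have hg : gVal n m l = 2 * ((l / 2 : ℕ) : ℤ) * ((l / 2 : ℕ) : ℤ) * m
      + 2 * ((l / 2 : ℕ) : ℤ) * (((l - 1) / 2 : ℕ) : ℤ) * n := by
    rw [gVal]
    by_cases hpar : l % 2 = 0
    · rw [if_pos hpar]
      have hr' : (((l - 1) / 2 : ℕ) : ℤ) = ((l / 2 : ℕ) : ℤ) - 1 := by omega
      rw [hr']; ring
    · rw [if_neg hpar]
      have hr' : (((l - 1) / 2 : ℕ) : ℤ) = ((l / 2 : ℕ) : ℤ) := by omega
      rw [hr']; ring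
  have hDnonneg : ∀ j : ZMod l, 0 ≤ ((X j : ℤ) - (l / 2 : ℕ)) * (Y (j + ((l / 2 : ℕ) : ZMod l)) : ℤ)
      + ((X (j + ((l / 2 : ℕ) : ZMod l)) : ℤ) - (l / 2 : ℕ)) * (Y j : ℤ) := by
    intro j
    have h1 := hXpos j
    have h2 := hXpos (j + ((l / 2 : ℕ) : ZMod l))
    have := mul_nonneg (show (0:ℤ) ≤ (X j : ℤ) - (l / 2 : ℕ) by omega)
      (show (0:ℤ) ≤ (Y (j + ((l / 2 : ℕ) : ZMod l)) : ℤ) by positivity)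
    have := mul_nonneg (show (0:ℤ) ≤ (X (j + ((l / 2 : ℕ) : ZMod l)) : ℤ) - (l / 2 : ℕ) by omega)
      (show (0:ℤ) ≤ (Y j : ℤ) by positivity)
    omega
  have hD0 : 0 ≤ D := by
    rw [hD]
    exact Finset.sum_nonneg fun j _ => hDnonneg j
  rw [hcast]
  constructor
  · linarith
  · have heq : (∑ j : ZMod l,
        ((X j : ℤ) * ((Y (j + ((l / 2 : ℕ) : ZMod l)) : ℤ) + ((l - 1) / 2 : ℕ))
          + (X (j + ((l / 2 : ℕ) : ZMod l)) : ℤ) * ((Y j : ℤ) + ((l - 1) / 2 : ℕ)))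
        = gVal n m l) ↔ D = 0 := by
      constructor <;> intro h <;> linarith
    rw [heq, hD, Finset.sum_eq_zero_iff_of_nonneg (fun j _ => hDnonneg j)]
    constructor
    · intro h j
      have hj := h j (Finset.mem_univ j)
      have h1 := hXpos j
      have h2 := hXpos (j + ((l / 2 : ℕ) : ZMod l))
      rw [add_eq_zero_iff_of_nonneg
          (mul_nonneg (by omega) (by positivity)) (mul_nonneg (by omega) (by positivity)),
        mul_eq_zero, mul_eq_zero] at hj
      omega
    · intro h j _
      have hj := h j
      have h1 := hXpos j
      have h2 := hXpos (j + ((l / 2 : ℕ) : ZMod l))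
      rw [add_eq_zero_iff_of_nonneg
          (mul_nonneg (by omega) (by positivity)) (mul_nonneg (by omega) (by positivity)),
        mul_eq_zero, mul_eq_zero]
      omega

variable {V : Type*} [Fintype V] {G : SimpleGraph V} {l : ℕ} {v : ZMod l → V}
variable (hcover : ∀ w : V, ∃ i : ZMod l, (offCycle G l v).Reachable (v i) w)
variable (hsep : ∀ i j : ZMod l, (offCycle G l v).Reachable (v i) (v j) → i = j)

include hcover hsep in
lemma E_equiv [NeZero l] (h3 : 3 ≤ l) :
    (∀ j : ZMod l,
      ((∑ t ∈ Finset.range (l / 2), compV G l v (j - ((t : ℕ) : ZMod l))) = l / 2 ∨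
        (∑ t ∈ Finset.range (l / 2),
          compE G l v (j + ((l / 2 : ℕ) : ZMod l) - ((t : ℕ) : ZMod l))) = 0)
      ∧ ((∑ t ∈ Finset.range (l / 2),
          compV G l v (j + ((l / 2 : ℕ) : ZMod l) - ((t : ℕ) : ZMod l))) = l / 2 ∨
        (∑ t ∈ Finset.range (l / 2), compE G l v (j - ((t : ℕ) : ZMod l))) = 0))
    ↔ (∀ a b : ZMod l, 0 < compE G l v a → 0 < compE G l v b → a = b) := by
  have hk1 : 1 ≤ l / 2 := by omega
  have h2k : 2 * (l / 2) ≤ l := by omega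
  constructor
  · intro hE a b ha hb
    by_contra hab
    obtain ⟨a', b', ha', hb', hd1, hd2⟩ : ∃ a' b' : ZMod l, 0 < compE G l v a' ∧
        0 < compE G l v b' ∧ 1 ≤ (a' - b').val ∧ (a' - b').val ≤ l / 2 := by
      have hne : (a - b).val ≠ 0 := by
        intro h0
        exact hab (sub_eq_zero.mp ((ZMod.val_eq_zero _).mp h0))
      rcases le_or_gt (a - b).val (l / 2) with h | h
      · exact ⟨a, b, ha, hb, by omega, h⟩
      · have hneg := SzProof.val_neg_add (a - b)
        have hval := ZMod.val_lt (a - b)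
        have hval2 := ZMod.val_lt (-(a - b))
        have hba : (b - a) = -(a - b) := by ring
        refine ⟨b, a, hb, ha, ?_, ?_⟩ <;> rw [hba] <;> omega
    have hY : 0 < ∑ t ∈ Finset.range (l / 2),
        compE G l v ((a' - 1) + ((l / 2 : ℕ) : ZMod l) - ((t : ℕ) : ZMod l)) := by
      have hmem : l / 2 - 1 ∈ Finset.range (l / 2) := Finset.mem_range.mpr (by omega)
      have hle := Finset.single_le_sum
        (f := fun t : ℕ => compE G l v ((a' - 1) + ((l / 2 : ℕ) : ZMod l) - ((t : ℕ) : ZMod l)))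
        (fun t _ => Nat.zero_le _) hmem
      have harg : (a' - 1) + ((l / 2 : ℕ) : ZMod l) - (((l / 2 - 1 : ℕ) : ℕ) : ZMod l) = a' := by
        rw [Nat.cast_sub hk1]
        push_cast
        ring
      rw [harg] at hle
      omega
    have hX : l / 2 < ∑ t ∈ Finset.range (l / 2), compV G l v ((a' - 1) - ((t : ℕ) : ZMod l)) := by
      have hmem : (a' - b').val - 1 ∈ Finset.range (l / 2) := Finset.mem_range.mpr (by omega)
      have hlt : (1 : ℕ) < compV G l v ((a' - 1) - ((((a' - b').val - 1 : ℕ)) : ZMod l)) := by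
        have harg : (a' - 1) - ((((a' - b').val - 1 : ℕ)) : ZMod l) = b' := by
          rw [Nat.cast_sub (by omega : 1 ≤ (a' - b').val), ZMod.natCast_zmod_val]
          push_cast
          ring
        rw [harg]
        have := two_le_compV_of_compE_pos (G := G) (l := l) (v := v) (j := b') (by omega)
        omega
      calc l / 2 = ∑ _t ∈ Finset.range (l / 2), 1 := by simp
        _ < _ := Finset.sum_lt_sum (f := fun _ : ℕ => 1)
            (g := fun t : ℕ => compV G l v ((a' - 1) - ((t : ℕ) : ZMod l)))
            (fun t _ => compV_pos _) ⟨(a' - b').val - 1, hmem, hlt⟩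
    rcases (hE (a' - 1)).1 with h | h
    · omega
    · omega
  · intro huni j
    constructor
    · by_cases hy : (∑ t ∈ Finset.range (l / 2),
          compE G l v (j + ((l / 2 : ℕ) : ZMod l) - ((t : ℕ) : ZMod l))) = 0
      · exact Or.inr hy
      · left
        obtain ⟨t₀, ht₀, hpos⟩ : ∃ t ∈ Finset.range (l / 2),
            compE G l v (j + ((l / 2 : ℕ) : ZMod l) - ((t : ℕ) : ZMod l)) ≠ 0 := by
          by_contra hco
          push_neg at hco
          exact hy (Finset.sum_eq_zero fun t ht => hco t ht)
        have ht₀' := Finset.mem_range.mp ht₀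
        have hcv1 : ∀ s ∈ Finset.range (l / 2), compV G l v (j - ((s : ℕ) : ZMod l)) = 1 := by
          intro s hs
          have hs' := Finset.mem_range.mp hs
          have hE0 : compE G l v (j - ((s : ℕ) : ZMod l)) = 0 := by
            by_contra hpos2
            have heq := huni _ _ (Nat.pos_of_ne_zero hpos) (Nat.pos_of_ne_zero hpos2)
            have hzero : ((l / 2 - t₀ + s : ℕ) : ZMod l) = 0 := by
              push_cast [Nat.cast_sub (le_of_lt ht₀')]
              linear_combination heq
            rw [ZMod.natCast_eq_zero_iff] at hzero
            have := Nat.le_of_dvd (by omega) hzero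
            omega
          have h1 := compV_pos (G := G) (l := l) (v := v) (j - ((s : ℕ) : ZMod l))
          by_contra hne
          have h2 : 2 ≤ compV G l v (j - ((s : ℕ) : ZMod l)) := by omega
          have := compE_pos_of_two_le_compV h2
          omega
        rw [Finset.sum_congr rfl hcv1]
        simp
    · by_cases hy : (∑ t ∈ Finset.range (l / 2),
          compE G l v (j - ((t : ℕ) : ZMod l))) = 0
      · exact Or.inr hy
      · left
        obtain ⟨t₀, ht₀, hpos⟩ : ∃ t ∈ Finset.range (l / 2),
            compE G l v (j - ((t : ℕ) : ZMod l)) ≠ 0 := by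
          by_contra hco
          push_neg at hco
          exact hy (Finset.sum_eq_zero fun t ht => hco t ht)
        have ht₀' := Finset.mem_range.mp ht₀
        have hcv1 : ∀ s ∈ Finset.range (l / 2),
            compV G l v (j + ((l / 2 : ℕ) : ZMod l) - ((s : ℕ) : ZMod l)) = 1 := by
          intro s hs
          have hs' := Finset.mem_range.mp hs
          have hE0 : compE G l v (j + ((l / 2 : ℕ) : ZMod l) - ((s : ℕ) : ZMod l)) = 0 := by
            by_contra hpos2
            have heq := huni _ _ (Nat.pos_of_ne_zero hpos) (Nat.pos_of_ne_zero hpos2)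
            have hzero : ((l / 2 - s + t₀ : ℕ) : ZMod l) = 0 := by
              push_cast [Nat.cast_sub (le_of_lt hs')]
              linear_combination -heq
            rw [ZMod.natCast_eq_zero_iff] at hzero
            have := Nat.le_of_dvd (by omega) hzero
            omega
          have h1 := compV_pos (G := G) (l := l) (v := v)
            (j + ((l / 2 : ℕ) : ZMod l) - ((s : ℕ) : ZMod l))
          by_contra hne
          have h2 : 2 ≤ compV G l v (j + ((l / 2 : ℕ) : ZMod l) - ((s : ℕ) : ZMod l)) := by omega
          have := compE_pos_of_two_le_compV h2
          omega
        rw [Finset.sum_congr rfl hcv1]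
        simp

end FinalPart
/-- Let `G` be a connected graph of order `n` containing a cycle
`C_l = v₀v₁⋯v_{l-1}v₀` (`l ≥ 3`) such that `G - E(C_l)` has exactly `l`
components `G₀,…,G_{l-1}` with `vᵢ ∈ Gᵢ`.  With `mᵢ = |E(Gᵢ)|`, `m = Σ mᵢ` and
`eᵢ = vᵢv_{i+1}`, one has
`Σᵢ [n_{vᵢ}(eᵢ|G)·m_{v_{i+1}}(eᵢ|G) + n_{v_{i+1}}(eᵢ|G)·m_{vᵢ}(eᵢ|G)] ≥ g(n,m,l)`,
with equality iff at most one of the `mᵢ` is positive. -/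
theorem szNM_cycle_sum_lower_bound {V : Type*} [Fintype V] (G : SimpleGraph V)
    (n l : ℕ) (hn : Fintype.card V = n) (h3 : 3 ≤ l) (v : ZMod l → V)
    (hinj : Function.Injective v) (hconn : G.Connected)
    (hadj : ∀ i : ZMod l, G.Adj (v i) (v (i + 1)))
    (hcover : ∀ w : V, ∃ i : ZMod l, (offCycle G l v).Reachable (v i) w)
    (hsep : ∀ i j : ZMod l, (offCycle G l v).Reachable (v i) (v j) → i = j) :
    gVal n (totE G l v) l ≤
      ∑ i ∈ Finset.range l,
        (szN G (v i) (v (i + 1)) * szM G (v (i + 1)) (v i) +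
          szN G (v (i + 1)) (v i) * szM G (v i) (v (i + 1)) : ℤ) ∧
    (∑ i ∈ Finset.range l,
        (szN G (v i) (v (i + 1)) * szM G (v (i + 1)) (v i) +
          szN G (v (i + 1)) (v i) * szM G (v i) (v (i + 1)) : ℤ) =
          gVal n (totE G l v) l ↔
      ∀ i j : ZMod l, 0 < compE G l v i → 0 < compE G l v j → i = j) := by
  haveI : NeZero l := ⟨by omega⟩
  -- abbreviations
  have hXpos : ∀ j : ZMod l,
      l / 2 ≤ ∑ t ∈ Finset.range (l / 2), compV G l v (j - ((t : ℕ) : ZMod l)) := by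
    intro j
    calc l / 2 = ∑ _t ∈ Finset.range (l / 2), 1 := by simp
      _ ≤ _ := Finset.sum_le_sum fun t _ => compV_pos _
  have hSX : ∑ j : ZMod l, (∑ t ∈ Finset.range (l / 2), compV G l v (j - ((t : ℕ) : ZMod l)))
      = l / 2 * n := by
    rw [Finset.sum_comm]
    have hinner : ∀ t ∈ Finset.range (l / 2),
        ∑ j : ZMod l, compV G l v (j - ((t : ℕ) : ZMod l)) = n := fun t _ => by
      rw [sum_shift_sub, sum_compV hcover hsep, hn]
    rw [Finset.sum_congr rfl hinner, Finset.sum_const, Finset.card_range, smul_eq_mul]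
  have htotE : ∑ j : ZMod l, compE G l v j = totE G l v := by
    rw [totE, sum_range_univ (fun j => compE G l v j)]
  have hSY : ∑ j : ZMod l, (∑ t ∈ Finset.range (l / 2), compE G l v (j - ((t : ℕ) : ZMod l)))
      = l / 2 * totE G l v := by
    rw [Finset.sum_comm]
    have hinner : ∀ t ∈ Finset.range (l / 2),
        ∑ j : ZMod l, compE G l v (j - ((t : ℕ) : ZMod l)) = totE G l v := fun t _ => by
      rw [sum_shift_sub]
      exact htotE
    rw [Finset.sum_congr rfl hinner, Finset.sum_const, Finset.card_range, smul_eq_mul]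
  have halg := final_algebra h3 n (totE G l v)
    (fun j => ∑ t ∈ Finset.range (l / 2), compV G l v (j - ((t : ℕ) : ZMod l)))
    (fun j => ∑ t ∈ Finset.range (l / 2), compE G l v (j - ((t : ℕ) : ZMod l)))
    hXpos hSX hSY
  -- szN and szM formulas
  have hszN1 : ∀ i' : ZMod l, szN G (v i') (v (i' + 1))
      = ∑ t ∈ Finset.range (l / 2), compV G l v (i' - ((t : ℕ) : ZMod l)) :=
    fun i' => szN_window hcover hsep h3 hconn hadj i'
  have hszN2 : ∀ i' : ZMod l, szN G (v (i' + 1)) (v i')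
      = ∑ t ∈ Finset.range (l / 2), compV G l v (i' + ((l / 2 : ℕ) : ZMod l) - ((t : ℕ) : ZMod l)) :=
    fun i' => szN_window' hcover hsep h3 hconn hadj i'
  have hszM1 : ∀ i' : ZMod l, szM G (v i') (v (i' + 1))
      = (∑ t ∈ Finset.range (l / 2), compE G l v (i' - ((t : ℕ) : ZMod l))) + (l - 1) / 2 := by
    intro i'
    refine szM_split hcover hsep h3 hinj hconn hadj i' i' (v i') (v (i' + 1)) ?_ ?_
    · intro x y hxy
      exact off_closer hcover hsep h3 hconn hadj hxy i'
    · intro t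
      rw [eDist_cyc hcover hsep h3 hconn hadj t i',
        eDist_cyc hcover hsep h3 hconn hadj t (i' + 1)]
      exact SzProof.cEdgeA h3 i' t
  have hszM2 : ∀ i' : ZMod l, szM G (v (i' + 1)) (v i')
      = (∑ t ∈ Finset.range (l / 2),
          compE G l v (i' + ((l / 2 : ℕ) : ZMod l) - ((t : ℕ) : ZMod l))) + (l - 1) / 2 := by
    intro i'
    refine szM_split hcover hsep h3 hinj hconn hadj (i' + ((l / 2 : ℕ) : ZMod l))
      (i' + (((l - 1) / 2 + 1 : ℕ) : ZMod l)) (v (i' + 1)) (v i') ?_ ?_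
    · intro x y hxy
      exact off_closer' hcover hsep h3 hconn hadj hxy i'
    · intro t
      rw [eDist_cyc hcover hsep h3 hconn hadj t (i' + 1),
        eDist_cyc hcover hsep h3 hconn hadj t i',
        SzProof.cEdgeB h3, SzProof.winC h3]
  -- identify the sums
  have hsum : (∑ i ∈ Finset.range l,
        (szN G (v i) (v (i + 1)) * szM G (v (i + 1)) (v i) +
          szN G (v (i + 1)) (v i) * szM G (v i) (v (i + 1)) : ℤ))
      = ((∑ j : ZMod l,
          ((∑ t ∈ Finset.range (l / 2), compV G l v (j - ((t : ℕ) : ZMod l)))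
              * ((∑ t ∈ Finset.range (l / 2),
                  compE G l v (j + ((l / 2 : ℕ) : ZMod l) - ((t : ℕ) : ZMod l))) + (l - 1) / 2)
            + (∑ t ∈ Finset.range (l / 2),
                compV G l v (j + ((l / 2 : ℕ) : ZMod l) - ((t : ℕ) : ZMod l)))
              * ((∑ t ∈ Finset.range (l / 2), compE G l v (j - ((t : ℕ) : ZMod l)))
                  + (l - 1) / 2)) : ℕ) : ℤ) := by
    have hterm : ∀ i ∈ Finset.range l,
        (szN G (v i) (v (i + 1)) * szM G (v (i + 1)) (v i) +
          szN G (v (i + 1)) (v i) * szM G (v i) (v (i + 1)) : ℤ)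
        = (((∑ t ∈ Finset.range (l / 2), compV G l v (((i : ℕ) : ZMod l) - ((t : ℕ) : ZMod l)))
              * ((∑ t ∈ Finset.range (l / 2),
                  compE G l v (((i : ℕ) : ZMod l) + ((l / 2 : ℕ) : ZMod l) - ((t : ℕ) : ZMod l)))
                  + (l - 1) / 2)
            + (∑ t ∈ Finset.range (l / 2),
                compV G l v (((i : ℕ) : ZMod l) + ((l / 2 : ℕ) : ZMod l) - ((t : ℕ) : ZMod l)))
              * ((∑ t ∈ Finset.range (l / 2), compE G l v (((i : ℕ) : ZMod l) - ((t : ℕ) : ZMod l)))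
                  + (l - 1) / 2) : ℕ) : ℤ) := by
      intro i _
      rw [hszN1, hszN2, hszM1, hszM2]
      push_cast
      ring
    rw [Finset.sum_congr rfl hterm, ← Nat.cast_sum]
    exact congrArg (Nat.cast : ℕ → ℤ) (sum_range_univ (fun j =>
      (∑ t ∈ Finset.range (l / 2), compV G l v (j - ((t : ℕ) : ZMod l)))
          * ((∑ t ∈ Finset.range (l / 2),
              compE G l v (j + ((l / 2 : ℕ) : ZMod l) - ((t : ℕ) : ZMod l))) + (l - 1) / 2)
        + (∑ t ∈ Finset.range (l / 2),
            compV G l v (j + ((l / 2 : ℕ) : ZMod l) - ((t : ℕ) : ZMod l)))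
          * ((∑ t ∈ Finset.range (l / 2), compE G l v (j - ((t : ℕ) : ZMod l)))
              + (l - 1) / 2)))
  rw [hsum]
  exact ⟨halg.1, halg.2.trans (E_equiv hcover hsep h3)⟩
end
end
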